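/- arXiv:0710.2614 — 6 statements merged into one kernel-verified Lean document; each statement's English description precedes it below -/
import Mathlib

section
/- Let a, b ∈ ℝ ∪ {−∞, +∞} with a < b, let n ≥ 2, and let f : (a,b)^2 → ℝ be such that (x₁,…,xₙ) ↦ f(min_i x_i, max_i x_i) is integrable on (a,b)^n. Then ∫_{(a,b)^n} f(min_i x_i, max_i x_i) dx = n(n−1) ∫_a^b ∫_a^v f(u,v) (v−u)^{n−2} du dv. -/
/-!
Almost every point of `(a, b)ⁿ` has pairwise distinct coordinates, so up to a null set the cube
splits into the `n (n - 1)` cells on which the minimum is attained at a coordinate `i` and the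
maximum at a coordinate `j ≠ i`. Permuting coordinates preserves Lebesgue measure, the cube and
the integrand, so all cells contribute the same amount. On the cell with maximum `v = x₀` and
minimum `u = x₁` the other `n - 2` coordinates range independently over `(u, v)`; integrating
them out by Fubini produces the factor `(v - u) ^ (n - 2)`.
-/

open MeasureTheory Set

section Perm

theorem Equiv.Perm.exists_apply_eq_and_apply_eq {α : Type*} [DecidableEq α] {i j i' j' : α}
    (hij : i ≠ j) (hij' : i' ≠ j') : ∃ σ : Equiv.Perm α, σ i = i' ∧ σ j = j' := by
  have hj : swap i i' j ≠ i' := fun h => hij ((swap i i').injective (by rw [h, swap_apply_left]))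
  refine ⟨swap (swap i i' j) j' * swap i i', ?_, ?_⟩
  · simp only [Perm.mul_apply, swap_apply_left]
    exact swap_apply_of_ne_of_ne hj.symm hij'
  · simp only [Perm.mul_apply, swap_apply_left]

theorem Set.preimage_comp_perm_univ_pi {ι α : Type*} (σ : Equiv.Perm ι) (I : Set α) :
    (· ∘ σ) ⁻¹' univ.pi (fun _ : ι => I) = univ.pi fun _ => I := by
  ext x
  simp only [mem_preimage, mem_univ_pi, Function.comp_apply]
  exact σ.forall_congr_right (q := fun k => x k ∈ I)

variable {ι α : Type*} [Fintype ι] [LinearOrder α] (H : (Finset.univ : Finset ι).Nonempty)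

theorem Finset.inf'_univ_comp_perm (σ : Equiv.Perm ι) (x : ι → α) :
    Finset.univ.inf' H (x ∘ σ) = Finset.univ.inf' H x := by
  refine eq_of_forall_le_iff fun c => ?_
  simp only [Finset.le_inf'_iff, Finset.mem_univ, true_implies, Function.comp_apply]
  exact σ.forall_congr_right (q := fun k => c ≤ x k)

theorem Finset.sup'_univ_comp_perm (σ : Equiv.Perm ι) (x : ι → α) :
    Finset.univ.sup' H (x ∘ σ) = Finset.univ.sup' H x := by
  refine eq_of_forall_ge_iff fun c => ?_
  simp only [Finset.sup'_le_iff, Finset.mem_univ, true_implies, Function.comp_apply]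
  exact σ.forall_congr_right (q := fun k => x k ≤ c)

end Perm

section MinMaxCell

variable {ι α : Type*} [LinearOrder α]

def minMaxCell (i j : ι) : Set (ι → α) :=
  {x | (∀ k ≠ i, x i < x k) ∧ ∀ k ≠ j, x k < x j}

theorem preimage_comp_minMaxCell (σ : Equiv.Perm ι) (i j : ι) :
    (· ∘ σ) ⁻¹' (minMaxCell i j : Set (ι → α)) = minMaxCell (σ i) (σ j) := by
  ext x
  simp only [minMaxCell, mem_preimage, mem_ofPred_eq, Function.comp_apply]
  rw [← σ.forall_congr_right (q := fun k => k ≠ σ i → x (σ i) < x k),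
    ← σ.forall_congr_right (q := fun k => k ≠ σ j → x k < x (σ j))]
  simp only [ne_eq, EmbeddingLike.apply_eq_iff_eq]

theorem pairwise_disjoint_minMaxCell :
    Pairwise (Function.onFun Disjoint fun p : ι × ι => (minMaxCell p.1 p.2 : Set (ι → α))) := by
  rintro ⟨i, j⟩ ⟨i', j'⟩ hne
  refine disjoint_left.2 fun x ⟨hi, hj⟩ ⟨hi', hj'⟩ => ?_
  by_cases hii' : i = i'
  · have hjj' : j ≠ j' := fun h => hne (by rw [hii', h])
    exact lt_asymm (hj j' hjj'.symm) (hj' j hjj')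
  · exact lt_asymm (hi i' (Ne.symm hii')) (hi' i hii')

theorem ne_of_mem_minMaxCell [Nontrivial ι] {i j : ι} {x : ι → α} (hx : x ∈ minMaxCell i j) :
    i ≠ j := by
  rintro rfl
  obtain ⟨k, hk⟩ := exists_ne i
  exact lt_asymm (hx.1 k hk) (hx.2 k hk)

theorem exists_mem_minMaxCell_of_injective [Finite ι] [Nonempty ι] {x : ι → α}
    (hx : x.Injective) : ∃ i j, x ∈ minMaxCell i j := by
  obtain ⟨i, hi⟩ := Finite.exists_min x
  obtain ⟨j, hj⟩ := Finite.exists_max x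
  exact ⟨i, j, fun k hk => (hi k).lt_of_ne (hx.ne hk.symm), fun k hk => (hj k).lt_of_ne (hx.ne hk)⟩

variable [Fintype ι] (H : (Finset.univ : Finset ι).Nonempty)

theorem inf'_univ_eq_of_mem_minMaxCell {i j : ι} {x : ι → α} (hx : x ∈ minMaxCell i j) :
    Finset.univ.inf' H x = x i :=
  le_antisymm (Finset.inf'_le _ (Finset.mem_univ i)) <| Finset.le_inf' _ _ fun k _ => by
    rcases eq_or_ne k i with rfl | hk
    exacts [le_rfl, (hx.1 k hk).le]

theorem sup'_univ_eq_of_mem_minMaxCell {i j : ι} {x : ι → α} (hx : x ∈ minMaxCell i j) :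
    Finset.univ.sup' H x = x j :=
  le_antisymm (Finset.sup'_le _ _ fun k _ => by
    rcases eq_or_ne k j with rfl | hk
    exacts [le_rfl, (hx.2 k hk).le]) (Finset.le_sup' _ (Finset.mem_univ j))

end MinMaxCell

theorem measurableSet_minMaxCell {ι : Type*} [Countable ι] (i j : ι) :
    MeasurableSet (minMaxCell i j : Set (ι → ℝ)) := by
  simp only [minMaxCell, ofPred_and, ofPred_forall]
  exact (MeasurableSet.iInter fun k => .iInter fun _ => measurableSet_lt (measurable_pi_apply i)
    (measurable_pi_apply k)).inter (MeasurableSet.iInter fun k => .iInter fun _ =>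
      measurableSet_lt (measurable_pi_apply k) (measurable_pi_apply j))

theorem volume_setOf_apply_eq_apply {ι : Type*} [Fintype ι] {i j : ι} (hij : i ≠ j) :
    volume {x : ι → ℝ | x i = x j} = 0 := by
  let φ : (ι → ℝ) →ₗ[ℝ] ℝ := LinearMap.proj (R := ℝ) (φ := fun _ : ι => ℝ) i - LinearMap.proj j
  have hker : {x : ι → ℝ | x i = x j} = LinearMap.ker φ := by
    ext x
    simp [φ, sub_eq_zero]
  rw [hker]
  refine Measure.addHaar_submodule _ _ fun htop => ?_
  classical
  have h : Pi.single i 1 ∈ LinearMap.ker φ := htop ▸ Submodule.mem_top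
  simp [φ, Pi.single_eq_of_ne hij.symm] at h

theorem ae_injective_pi_real {ι : Type*} [Fintype ι] : ∀ᵐ x : ι → ℝ, x.Injective := by
  simp only [Function.Injective, ae_all_iff]
  intro i j
  by_cases hij : i = j
  · exact .of_forall fun _ _ => hij
  · exact measure_mono_null (fun x hx => by simpa [hij] using hx) (volume_setOf_apply_eq_apply hij)

section CellDecomposition

variable {E : Type*} [NormedAddCommGroup E] [NormedSpace ℝ E]

theorem setIntegral_eq_sum_setIntegral_inter_minMaxCell {ι : Type*} [Fintype ι] [DecidableEq ι]
    [Nontrivial ι] {s : Set (ι → ℝ)} (hs : MeasurableSet s) {g : (ι → ℝ) → E}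
    (hg : IntegrableOn g s) :
    ∫ x in s, g x = ∑ p ∈ Finset.univ.offDiag, ∫ x in s ∩ minMaxCell p.1 p.2, g x := by
  have hcover : s =ᵐ[volume] ⋃ p ∈ Finset.univ.offDiag, s ∩ minMaxCell p.1 p.2 := by
    filter_upwards [ae_injective_pi_real] with x hx
    obtain ⟨i, j, hij⟩ := exists_mem_minMaxCell_of_injective hx
    refine propext ⟨fun hxs => mem_iUnion₂.2 ⟨(i, j), ?_, hxs, hij⟩, fun hx' => ?_⟩
    · exact Finset.mem_offDiag.2 ⟨Finset.mem_univ _, Finset.mem_univ _, ne_of_mem_minMaxCell hij⟩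
    · obtain ⟨p, -, hxs, -⟩ := mem_iUnion₂.1 hx'
      exact hxs
  rw [setIntegral_congr_set hcover]
  refine integral_biUnion_finset _ (fun p _ => hs.inter (measurableSet_minMaxCell _ _))
    (fun p _ q _ hpq => ?_) fun p _ => hg.mono_set inter_subset_left
  exact (pairwise_disjoint_minMaxCell hpq).mono inter_subset_right inter_subset_right

theorem setIntegral_inter_minMaxCell_perm {ι : Type*} [Fintype ι] {s : Set (ι → ℝ)}
    (hs : ∀ σ : Equiv.Perm ι, (· ∘ σ) ⁻¹' s = s) {g : (ι → ℝ) → E}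
    (hg : ∀ (σ : Equiv.Perm ι) x, g (x ∘ σ) = g x) (σ : Equiv.Perm ι) (i j : ι) :
    ∫ x in s ∩ minMaxCell (σ i) (σ j), g x = ∫ x in s ∩ minMaxCell i j, g x := by
  let e := MeasurableEquiv.piCongrLeft (fun _ : ι => ℝ) σ.symm
  have he : ⇑e = (· ∘ σ) := by
    ext x k
    simp [e, MeasurableEquiv.coe_piCongrLeft, Equiv.piCongrLeft_apply]
  symm
  rw [← (volume_measurePreserving_piCongrLeft (fun _ : ι => ℝ) σ.symm).setIntegral_preimage_emb
    e.measurableEmbedding, he, preimage_inter, hs, preimage_comp_minMaxCell]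
  simp only [hg]

end CellDecomposition

section Fubini

variable {α β E : Type*} [MeasurableSpace α] [MeasurableSpace β] [NormedAddCommGroup E]
  {μ : Measure α} {ν : Measure β} [SFinite μ] [SFinite ν] {s : Set (α × β)} {f : α × β → E}

theorem IntegrableOn.ae_integrableOn_prodMk (hs : MeasurableSet s)
    (hf : IntegrableOn f s (μ.prod ν)) :
    ∀ᵐ x ∂μ, IntegrableOn (fun y => f (x, y)) (Prod.mk x ⁻¹' s) ν := by
  filter_upwards [((integrable_indicator_iff hs).2 hf).prod_right_ae] with x hx
  exact (integrable_indicator_iff (measurable_prodMk_left hs)).1 hx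

theorem setIntegral_prod_eq_integral_setIntegral [NormedSpace ℝ E]
    (hs : MeasurableSet s) (hf : IntegrableOn f s (μ.prod ν)) :
    ∫ z in s, f z ∂μ.prod ν = ∫ x, ∫ y in Prod.mk x ⁻¹' s, f (x, y) ∂ν ∂μ := by
  rw [← integral_indicator hs, integral_prod _ ((integrable_indicator_iff hs).2 hf)]
  simp only [← integral_indicator (measurable_prodMk_left hs)]
  rfl

end Fubini

section FinCons

variable {E : Type*} [NormedAddCommGroup E] {n : ℕ} {s : Set (Fin (n + 1) → ℝ)}
  {F : (Fin (n + 1) → ℝ) → E}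

theorem coe_piFinSuccAbove_zero_symm :
    ⇑(MeasurableEquiv.piFinSuccAbove (fun _ : Fin (n + 1) => ℝ) 0).symm =
      fun p => Fin.cons p.1 p.2 := by
  ext p
  simp [MeasurableEquiv.piFinSuccAbove]

theorem measurePreserving_finCons :
    MeasurePreserving (fun p : ℝ × (Fin n → ℝ) => (Fin.cons p.1 p.2 : Fin (n + 1) → ℝ))
      (volume.prod volume) volume :=
  coe_piFinSuccAbove_zero_symm ▸ (volume_preserving_piFinSuccAbove (fun _ => ℝ) 0).symm

theorem measurableEmbedding_finCons :
    MeasurableEmbedding (fun p : ℝ × (Fin n → ℝ) => (Fin.cons p.1 p.2 : Fin (n + 1) → ℝ)) :=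
  coe_piFinSuccAbove_zero_symm ▸ (MeasurableEquiv.piFinSuccAbove _ 0).symm.measurableEmbedding

theorem MeasurableSet.setOf_finCons_mem (hs : MeasurableSet s) (t : ℝ) :
    MeasurableSet {y : Fin n → ℝ | Fin.cons t y ∈ s} :=
  measurable_prodMk_left (measurableEmbedding_finCons.measurable hs)

theorem IntegrableOn.comp_finCons (hF : IntegrableOn F s) :
    IntegrableOn (fun p : ℝ × (Fin n → ℝ) => F (Fin.cons p.1 p.2))
      ((fun p => Fin.cons p.1 p.2) ⁻¹' s) (volume.prod volume) :=
  (measurePreserving_finCons.integrableOn_comp_preimage measurableEmbedding_finCons).2 hF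

theorem IntegrableOn.ae_integrableOn_finCons (hs : MeasurableSet s) (hF : IntegrableOn F s) :
    ∀ᵐ t, IntegrableOn (fun y => F (Fin.cons t y)) {y | Fin.cons t y ∈ s} := by
  filter_upwards [IntegrableOn.ae_integrableOn_prodMk (measurableEmbedding_finCons.measurable hs)
    (IntegrableOn.comp_finCons hF)] with t ht
  exact ht

theorem setIntegral_eq_integral_setIntegral_finCons [NormedSpace ℝ E] (hs : MeasurableSet s)
    (hF : IntegrableOn F s) :
    ∫ x in s, F x = ∫ t, ∫ y in {y | Fin.cons t y ∈ s}, F (Fin.cons t y) := by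
  rw [← measurePreserving_finCons.setIntegral_preimage_emb measurableEmbedding_finCons,
    setIntegral_prod_eq_integral_setIntegral (measurableEmbedding_finCons.measurable hs)
      (IntegrableOn.comp_finCons hF)]
  rfl

end FinCons

theorem cons_cons_mem_pi_inter_minMaxCell_iff {m : ℕ} {I : Set ℝ} (hI : I.OrdConnected)
    {v u : ℝ} {w : Fin m → ℝ} :
    (Fin.cons v (Fin.cons u w) : Fin (m + 2) → ℝ) ∈ univ.pi (fun _ => I) ∩ minMaxCell 1 0 ↔
      v ∈ I ∧ u ∈ I ∩ Iio v ∧ w ∈ univ.pi fun _ => Ioo u v := by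
  simp only [minMaxCell, mem_inter_iff, mem_univ_pi, mem_ofPred_eq, Fin.forall_fin_succ,
    Fin.cons_zero, Fin.cons_succ, Fin.cons_one, mem_Iio, mem_Ioo, Fin.succ_zero_eq_one, ne_eq,
    zero_ne_one, Fin.succ_succ_ne_one, Fin.succ_ne_zero, not_true, not_false_eq_true,
    false_implies, true_implies, lt_self_iff_false, forall_and]
  constructor
  · rintro ⟨⟨hv, hu, -⟩, ⟨huv, -, hw⟩, -, -, hw'⟩
    exact ⟨hv, ⟨hu, huv⟩, hw, hw'⟩
  · rintro ⟨hv, ⟨hu, huv⟩, hw, hw'⟩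
    exact ⟨⟨hv, hu, fun i => hI.out hu hv ⟨(hw i).le, (hw' i).le⟩⟩, ⟨huv, trivial, hw⟩, trivial,
      huv, hw'⟩

section MinMaxIntegral

variable {E : Type*} [NormedAddCommGroup E] [NormedSpace ℝ E] [CompleteSpace E]

-- The maximum sits at coordinate `0` so that peeling off coordinates with `Fin.cons` puts `v`
-- in the outer integral.
theorem setIntegral_pi_inter_minMaxCell_one_zero {m : ℕ} {I : Set ℝ} (hI : I.OrdConnected)
    (h : ℝ → ℝ → E)
    (hh : IntegrableOn (fun x : Fin (m + 2) → ℝ => h (x 1) (x 0))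
      (univ.pi (fun _ => I) ∩ minMaxCell 1 0)) :
    ∫ x in univ.pi (fun _ : Fin (m + 2) => I) ∩ minMaxCell 1 0, h (x 1) (x 0) =
      ∫ v in I, ∫ u in I ∩ Iio v, (v - u) ^ m • h u v := by
  have hmeas : MeasurableSet (univ.pi (fun _ : Fin (m + 2) => I) ∩ minMaxCell 1 0) :=
    (MeasurableSet.univ_pi fun _ => hI.measurableSet).inter (measurableSet_minMaxCell 1 0)
  rw [setIntegral_eq_integral_setIntegral_finCons hmeas hh,
    ← setIntegral_eq_integral_of_forall_compl_eq_zero]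
  · refine setIntegral_congr_ae hI.measurableSet ?_
    filter_upwards [IntegrableOn.ae_integrableOn_finCons hmeas hh] with v hv hvI
    rw [setIntegral_eq_integral_setIntegral_finCons (hmeas.setOf_finCons_mem v) hv,
      ← integral_indicator (hI.measurableSet.inter measurableSet_Iio)]
    congr 1 with u
    simp only [mem_ofPred_eq, cons_cons_mem_pi_inter_minMaxCell_iff hI, hvI, true_and,
      Fin.cons_zero, Fin.cons_one]
    by_cases hu : u ∈ I ∩ Iio v
    · simp only [hu, true_and, ofPred_mem_eq]
      rw [indicator_of_mem hu, setIntegral_const, measureReal_def,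
        Real.volume_pi_Ioo_toReal fun _ => hu.2.le]
      simp only [Finset.prod_const, Finset.card_univ, Fintype.card_fin]
    · simp only [hu, false_and, ofPred_false, Measure.restrict_empty, integral_zero_measure,
        indicator_of_notMem hu]
  · intro v hv
    have hempty :
        {y : Fin (m + 1) → ℝ | Fin.cons v y ∈ univ.pi (fun _ => I) ∩ minMaxCell 1 0} = ∅ :=
      eq_empty_of_forall_notMem fun y hy => hv (hy.1 0 trivial)
    rw [hempty, setIntegral_empty]

theorem setIntegral_univ_pi_inf'_sup' {m : ℕ} {I : Set ℝ} (hI : I.OrdConnected) (h : ℝ → ℝ → E)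
    (hh : IntegrableOn (fun x : Fin (m + 2) → ℝ =>
      h (Finset.univ.inf' Finset.univ_nonempty x) (Finset.univ.sup' Finset.univ_nonempty x))
      (univ.pi fun _ => I)) :
    ∫ x in univ.pi (fun _ : Fin (m + 2) => I),
        h (Finset.univ.inf' Finset.univ_nonempty x) (Finset.univ.sup' Finset.univ_nonempty x) =
      ((m + 2 : ℝ) * (m + 1)) • ∫ v in I, ∫ u in I ∩ Iio v, (v - u) ^ m • h u v := by
  set g : (Fin (m + 2) → ℝ) → E := fun x =>
    h (Finset.univ.inf' Finset.univ_nonempty x) (Finset.univ.sup' Finset.univ_nonempty x)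
  set S := univ.pi fun _ : Fin (m + 2) => I
  have hS : MeasurableSet S := .univ_pi fun _ => hI.measurableSet
  have hS10 : MeasurableSet (S ∩ minMaxCell 1 0) := hS.inter (measurableSet_minMaxCell 1 0)
  have hcell : ∀ p ∈ Finset.univ.offDiag,
      ∫ x in S ∩ minMaxCell p.1 p.2, g x = ∫ x in S ∩ minMaxCell 1 0, g x := by
    intro p hp
    obtain ⟨σ, h1, h0⟩ :=
      Equiv.Perm.exists_apply_eq_and_apply_eq one_ne_zero (Finset.mem_offDiag.1 hp).2.2
    rw [← h1, ← h0]
    refine setIntegral_inter_minMaxCell_perm (fun σ => preimage_comp_perm_univ_pi σ I)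
      (fun σ x => ?_) σ 1 0
    simp only [g, Finset.inf'_univ_comp_perm, Finset.sup'_univ_comp_perm]
  have hg : EqOn g (fun x => h (x 1) (x 0)) (S ∩ minMaxCell 1 0) := fun x hx => by
    simp only [g, inf'_univ_eq_of_mem_minMaxCell _ hx.2, sup'_univ_eq_of_mem_minMaxCell _ hx.2]
  rw [setIntegral_eq_sum_setIntegral_inter_minMaxCell hS hh, Finset.sum_congr rfl hcell,
    Finset.sum_const, Finset.offDiag_card, Finset.card_univ, Fintype.card_fin,
    setIntegral_congr_fun hS10 hg, setIntegral_pi_inter_minMaxCell_one_zero hI h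
      ((hh.mono_set inter_subset_left).congr_fun hg hS10), ← Nat.cast_smul_eq_nsmul ℝ,
    Nat.cast_sub (Nat.le_mul_self _)]
  congr 1
  push_cast
  ring

end MinMaxIntegral

/-- Formula (2): for `a, b ∈ ℝ ∪ {−∞, +∞}` with `a < b`, `n ≥ 2`, and `f : ]a,b[² → ℝ`
such that `x ↦ f(min_i x_i, max_i x_i)` is integrable on `]a,b[^n`,
`∫_{]a,b[^n} f(min_i x_i, max_i x_i) dx = n(n−1) ∫_a^b ∫_a^v f(u,v) (v−u)^{n−2} du dv`. -/
theorem integral_of_min_max (a b : EReal) (n : ℕ) (hn : 2 ≤ n) (f : ℝ → ℝ → ℝ)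
    (hf : IntegrableOn
      (fun x : Fin n → ℝ =>
        f (Finset.univ.inf' ⟨⟨0, by omega⟩, Finset.mem_univ _⟩ x)
          (Finset.univ.sup' ⟨⟨0, by omega⟩, Finset.mem_univ _⟩ x))
      (Set.univ.pi fun _ : Fin n => {t : ℝ | a < (t : EReal) ∧ (t : EReal) < b})) :
    (∫ x in Set.univ.pi fun _ : Fin n => {t : ℝ | a < (t : EReal) ∧ (t : EReal) < b},
        f (Finset.univ.inf' ⟨⟨0, by omega⟩, Finset.mem_univ _⟩ x)
          (Finset.univ.sup' ⟨⟨0, by omega⟩, Finset.mem_univ _⟩ x))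
      = (n : ℝ) * ((n : ℝ) - 1) *
          ∫ v in {t : ℝ | a < (t : EReal) ∧ (t : EReal) < b},
            ∫ u in {t : ℝ | a < (t : EReal) ∧ t < v}, f u v * (v - u) ^ (n - 2) := by
  obtain ⟨m, rfl⟩ : ∃ m, n = m + 2 := ⟨n - 2, by omega⟩
  set I : Set ℝ := {t : ℝ | a < (t : EReal) ∧ (t : EReal) < b}
  have hI : I.OrdConnected := ordConnected_Ioo.preimage_mono EReal.coe_strictMono.monotone
  rw [setIntegral_univ_pi_inf'_sup' hI f hf, smul_eq_mul]
  congr 1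
  · push_cast
    ring
  · refine setIntegral_congr_fun hI.measurableSet fun v hv => ?_
    have hIv : {t : ℝ | a < (t : EReal) ∧ t < v} = I ∩ Iio v :=
      ext fun t => ⟨fun ht => ⟨⟨ht.1, (EReal.coe_lt_coe ht.2).trans hv.2⟩, ht.2⟩,
        fun ht => ⟨ht.1.1, ht.2⟩⟩
    simp only [hIv, smul_eq_mul, mul_comm, Nat.add_sub_cancel]
end

section
/- Let a, b ∈ ℝ with a < b, let n ≥ 1, let S be a nonempty subset of {1,…,n}, and let f : (a,b) → ℝ be such that x ↦ f(min_{i ∈ S} x_i) is integrable on (a,b)^n. Then ∫_{(a,b)^n} f(min_{i ∈ S} x_i) dx = (b−a)^{n−|S|} · |S| · ∫_a^b f(u) (b−u)^{|S|−1} du. -/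
/-!
Partition `ℝⁿ` according to the first index `i ∈ S` at which `min_{j ∈ S} x_j` is attained,
that is, the index minimising `(x_i, i)` lexicographically; this makes the pieces disjoint
without discarding the null set of ties. On the piece belonging to `i` the integrand is
`f (x i)`, and Fubini along the coordinate `i` turns its integral into
`∫_a^b f(u) · vol(slice at x_i = u) du`. The slice is a box with `|S| - 1` sides of length
`b - u` (the other coordinates in `S` must lie above `u`) and `n - |S|` sides of length `b - a`,
so all `|S|` pieces contribute the same amount.
-/

open MeasureTheory Set Finset

section FirstMin

variable {ι α : Type*} [LinearOrder ι] [LinearOrder α]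

def firstMinSet (S : Finset ι) (i : ι) : Set (ι → α) :=
  {x | ∀ j ∈ S, toLex (x i, i) ≤ toLex (x j, j)}

theorem Finset.inf'_eq_of_mem_firstMinSet {S : Finset ι} (hS : S.Nonempty) {i : ι} (hi : i ∈ S)
    {x : ι → α} (hx : x ∈ firstMinSet S i) : S.inf' hS x = x i :=
  le_antisymm (S.inf'_le x hi) <| S.le_inf' hS x fun j hj => Prod.Lex.monotone_fst _ _ (hx j hj)

theorem iUnion_firstMinSet {S : Finset ι} (hS : S.Nonempty) :
    ⋃ i ∈ S, firstMinSet S i = (univ : Set (ι → α)) := by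
  refine eq_univ_of_forall fun x => ?_
  obtain ⟨i, hi, hmin⟩ := S.exists_min_image (fun j => toLex (x j, j)) hS
  exact mem_biUnion hi hmin

theorem pairwiseDisjoint_firstMinSet (S : Finset ι) :
    (S : Set ι).PairwiseDisjoint (firstMinSet S : ι → Set (ι → α)) := by
  intro i hi j hj hij
  refine disjoint_left.mpr fun x hxi hxj => hij ?_
  exact congrArg (fun p => (ofLex p).2) (le_antisymm (hxi j hj) (hxj i hi))

theorem measurableSet_firstMinSet [Countable ι] [TopologicalSpace α] [OrderClosedTopology α]
    [SecondCountableTopology α] [MeasurableSpace α] [OpensMeasurableSpace α]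
    (S : Finset ι) (i : ι) : MeasurableSet (firstMinSet S i : Set (ι → α)) := by
  simp only [firstMinSet, ofPred_forall, Prod.Lex.toLex_le_toLex]
  refine MeasurableSet.biInter S.countable_toSet fun j _ => ?_
  exact (measurableSet_lt (measurable_pi_apply i) (measurable_pi_apply j)).union
    ((measurableSet_eq_fun (measurable_pi_apply i) (measurable_pi_apply j)).inter
      (MeasurableSet.const _))

theorem Fin.insertNth_mem_pi_inter_firstMinSet_iff {m : ℕ} {t : Set α} {S : Finset (Fin (m + 1))}
    {i : Fin (m + 1)} {u : α} {y : Fin m → α} :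
    i.insertNth u y ∈ univ.pi (fun _ => t) ∩ firstMinSet S i ↔
      u ∈ t ∧ y ∈ univ.pi fun k =>
        t ∩ {v | i.succAbove k ∈ S → toLex (u, i) ≤ toLex (v, i.succAbove k)} := by
  simp [firstMinSet, Fin.forall_iff_succAbove i, forall_and, and_assoc]

end FirstMin

theorem Fin.prod_ite_succAbove_mem {M : Type*} [CommMonoid M] {m : ℕ} {S : Finset (Fin (m + 1))}
    {i : Fin (m + 1)} (hi : i ∈ S) (c d : M) :
    ∏ k : Fin m, (if i.succAbove k ∈ S then c else d) = c ^ (#S - 1) * d ^ (m + 1 - #S) := by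
  have hmem : filter (· ∈ S) {i}ᶜ = S.erase i := by ext; simp
  have hnotMem : filter (· ∉ S) {i}ᶜ = Sᶜ := by
    ext j
    simp only [mem_filter, Finset.mem_compl, Finset.mem_singleton]
    exact ⟨And.right, fun hj => ⟨fun hji => hj (hji ▸ hi), hj⟩⟩
  rw [← prod_image (f := fun j => if j ∈ S then c else d) (succAbove_right_injective.injOn),
    image_succAbove_univ, prod_ite, hmem, hnotMem, Finset.prod_const, Finset.prod_const,
    card_erase_of_mem hi, card_compl, Fintype.card_fin]

theorem Real.volume_Ioo_inter_of_Ioi_subset_of_subset_Ici {a b u : ℝ} {A : Set ℝ} (hau : a ≤ u)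
    (hIoi : Ioi u ⊆ A) (hIci : A ⊆ Ici u) : volume (Ioo a b ∩ A) = ENNReal.ofReal (b - u) := by
  have hupper : Ioo a b ∩ A ⊆ Ico u b := fun v hv => ⟨hIci hv.2, hv.1.2⟩
  have hlower : Ioo u b ⊆ Ioo a b ∩ A := fun v hv => ⟨⟨hau.trans_lt hv.1, hv.2⟩, hIoi hv.1⟩
  refine le_antisymm ?_ ?_
  · simpa using measure_mono (μ := volume) hupper
  · simpa using measure_mono (μ := volume) hlower

theorem measureReal_insertNth_preimage_box_inter_firstMinSet {m : ℕ} {a b u : ℝ}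
    {S : Finset (Fin (m + 1))} {i : Fin (m + 1)} (hi : i ∈ S) :
    volume.real {y : Fin m → ℝ | i.insertNth u y ∈ univ.pi (fun _ => Ioo a b) ∩ firstMinSet S i} =
      (Ioo a b).indicator (fun u => (b - u) ^ (#S - 1) * (b - a) ^ (m + 1 - #S)) u := by
  simp_rw [Fin.insertNth_mem_pi_inter_firstMinSet_iff]
  by_cases hu : u ∈ Ioo a b
  · have hfactor : ∀ k : Fin m, volume.real
        (Ioo a b ∩ {v | i.succAbove k ∈ S → toLex (u, i) ≤ toLex (v, i.succAbove k)}) =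
          if i.succAbove k ∈ S then b - u else b - a := by
      intro k
      by_cases hk : i.succAbove k ∈ S
      · have hIoi : Ioi u ⊆ {v | toLex (u, i) ≤ toLex (v, i.succAbove k)} :=
          fun v hv => Prod.Lex.toLex_le_toLex.mpr (Or.inl hv)
        have hIci : {v | toLex (u, i) ≤ toLex (v, i.succAbove k)} ⊆ Ici u :=
          fun v hv => Prod.Lex.monotone_fst _ _ hv
        simp only [hk, forall_const, if_true, measureReal_def,
          Real.volume_Ioo_inter_of_Ioi_subset_of_subset_Ici hu.1.le hIoi hIci]
        exact ENNReal.toReal_ofReal (sub_nonneg.mpr hu.2.le)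
      · simp [hk, (hu.1.trans hu.2).le]
    simp only [hu, true_and, ofPred_mem_eq, indicator_of_mem, measureReal_def, volume_pi_pi,
      ENNReal.toReal_prod]
    simp_rw [← measureReal_def, hfactor]
    exact Fin.prod_ite_succAbove_mem hi _ _
  · simp [hu]

theorem setIntegral_comp_fst_eq_integral_measureReal_smul {α β E : Type*} [MeasurableSpace α]
    [MeasurableSpace β] [NormedAddCommGroup E] [NormedSpace ℝ E] [CompleteSpace E]
    {μ : Measure α} {ν : Measure β} [SFinite μ] [SFinite ν] {s : Set (α × β)}
    (hs : MeasurableSet s) {g : α → E} (hg : IntegrableOn (fun p => g p.1) s (μ.prod ν)) :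
    ∫ p in s, g p.1 ∂μ.prod ν = ∫ u, ν.real (Prod.mk u ⁻¹' s) • g u ∂μ := by
  rw [← integral_indicator hs, integral_prod _ ((integrable_indicator_iff hs).mpr hg)]
  congr 1 with u
  rw [← integral_indicator_const _ (measurable_prodMk_left hs)]
  rfl

theorem setIntegral_comp_eval_eq_integral_measureReal_smul {m : ℕ} {E : Type*}
    [NormedAddCommGroup E] [NormedSpace ℝ E] [CompleteSpace E] (i : Fin (m + 1))
    {s : Set (Fin (m + 1) → ℝ)} (hs : MeasurableSet s) {g : ℝ → E}
    (hg : IntegrableOn (fun x => g (x i)) s) :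
    ∫ x in s, g (x i) = ∫ u, volume.real {y : Fin m → ℝ | i.insertNth u y ∈ s} • g u := by
  set e := (MeasurableEquiv.piFinSuccAbove (fun _ : Fin (m + 1) => ℝ) i).symm
  have he : MeasurePreserving e (volume.prod volume) volume :=
    (volume_preserving_piFinSuccAbove (fun _ : Fin (m + 1) => ℝ) i).symm
  have hei : ∀ p, e p i = p.1 := fun p => by simp [e, MeasurableEquiv.piFinSuccAbove_symm_apply]
  rw [← he.setIntegral_preimage_emb e.measurableEmbedding]
  simp_rw [hei]
  rw [setIntegral_comp_fst_eq_integral_measureReal_smul (e.measurable hs)]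
  · rfl
  · rw [← he.integrableOn_comp_preimage e.measurableEmbedding] at hg
    simpa only [Function.comp_def, hei] using hg

theorem setIntegral_box_inter_firstMinSet {m : ℕ} {a b : ℝ} {S : Finset (Fin (m + 1))}
    {i : Fin (m + 1)} (hi : i ∈ S) {f : ℝ → ℝ}
    (hf : IntegrableOn (fun x => f (x i)) (univ.pi (fun _ => Ioo a b) ∩ firstMinSet S i)) :
    ∫ x in univ.pi (fun _ => Ioo a b) ∩ firstMinSet S i, f (x i) =
      (b - a) ^ (m + 1 - #S) * ∫ u in Ioo a b, f u * (b - u) ^ (#S - 1) := by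
  have hcell : MeasurableSet (univ.pi (fun _ => Ioo a b) ∩ firstMinSet S i) :=
    (MeasurableSet.univ_pi fun _ => measurableSet_Ioo).inter (measurableSet_firstMinSet S i)
  simp_rw [setIntegral_comp_eval_eq_integral_measureReal_smul i hcell hf,
    measureReal_insertNth_preimage_box_inter_firstMinSet hi, smul_eq_mul,
    ← indicator_mul_left, integral_indicator measurableSet_Ioo, ← integral_const_mul]
  congr 1 with u
  ring

theorem integral_of_min_on_subset_general (a b : ℝ) (n : ℕ)
    (S : Finset (Fin n)) (hS : S.Nonempty) (f : ℝ → ℝ)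
    (hf : IntegrableOn (fun x : Fin n → ℝ => f (S.inf' hS x))
      (Set.univ.pi fun _ : Fin n => Set.Ioo a b)) :
    (∫ x in Set.univ.pi fun _ : Fin n => Set.Ioo a b, f (S.inf' hS x))
      = (b - a) ^ (n - S.card) * (S.card : ℝ) *
          ∫ u in Set.Ioo a b, f u * (b - u) ^ (S.card - 1) := by
  obtain ⟨m, rfl⟩ := Nat.exists_eq_add_one_of_ne_zero hS.choose.pos.ne'
  set box : Set (Fin (m + 1) → ℝ) := univ.pi fun _ => Ioo a b
  have hcell (i : Fin (m + 1)) : MeasurableSet (box ∩ firstMinSet S i) :=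
    (MeasurableSet.univ_pi fun _ => measurableSet_Ioo).inter (measurableSet_firstMinSet S i)
  have hf_cell {i} (hi : i ∈ S) : EqOn (fun x => f (S.inf' hS x)) (fun x => f (x i))
      (box ∩ firstMinSet S i) :=
    fun x hx => congrArg f (S.inf'_eq_of_mem_firstMinSet hS hi hx.2)
  calc ∫ x in box, f (S.inf' hS x)
      = ∑ i ∈ S, ∫ x in box ∩ firstMinSet S i, f (S.inf' hS x) := by
        conv_lhs => rw [← inter_univ box, ← iUnion_firstMinSet hS, inter_iUnion₂]
        exact integral_biUnion_finset S (fun i _ => hcell i)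
          ((pairwiseDisjoint_firstMinSet S).mono fun _ => inter_subset_right)
          (fun i _ => hf.mono_set inter_subset_left)
    _ = ∑ i ∈ S, (b - a) ^ (m + 1 - #S) * ∫ u in Ioo a b, f u * (b - u) ^ (#S - 1) := by
        refine sum_congr rfl fun i hi => ?_
        rw [setIntegral_congr_fun (hcell i) (hf_cell hi)]
        exact setIntegral_box_inter_firstMinSet hi
          ((hf.mono_set inter_subset_left).congr_fun (hf_cell hi) (hcell i))
    _ = _ := by rw [sum_const, nsmul_eq_mul]; ring

/-- Formula (4): for real `a < b`, `n ≥ 1`, a nonempty `S ⊆ {1,…,n}`, and `f : ]a,b[ → ℝ`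
such that `x ↦ f(min_{i ∈ S} x_i)` is integrable on `]a,b[^n`,
`∫_{]a,b[^n} f(min_{i∈S} x_i) dx = (b−a)^{n−|S|} |S| ∫_a^b f(u) (b−u)^{|S|−1} du`. -/
theorem integral_of_min_on_subset (a b : ℝ) (hab : a < b) (n : ℕ) (hn : 1 ≤ n)
    (S : Finset (Fin n)) (hS : S.Nonempty) (f : ℝ → ℝ)
    (hf : IntegrableOn (fun x : Fin n → ℝ => f (S.inf' hS x))
      (Set.univ.pi fun _ : Fin n => Set.Ioo a b)) :
    (∫ x in Set.univ.pi fun _ : Fin n => Set.Ioo a b, f (S.inf' hS x))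
      = (b - a) ^ (n - S.card) * (S.card : ℝ) *
          ∫ u in Set.Ioo a b, f u * (b - u) ^ (S.card - 1) :=
  integral_of_min_on_subset_general a b n S hS f hf
end

section
/- The orness average value over [0,1]² of the geometric mean G(x₁,x₂) = (x₁x₂)^{1/2} equals ln 4 − 1, i.e., ∫_{(0,1)²} (√(x₁x₂) − min(x₁,x₂))/(max(x₁,x₂) − min(x₁,x₂)) dx₁ dx₂ = ln 4 − 1. -/
/-!
With `a = √(min x y)` and `b = √(max x y)` the integrand is `(ab - a²)/(b² - a²) = a/(a + b)`
off the diagonal. By symmetry the integral over the square is twice the integral over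
`{y < x}`, whose inner integral `∫₀ˣ √y/(√x + √y) dy` is homogeneous of degree one in `x`:
it equals `x ∫₀¹ √t/(1 + √t) dt = x (2 log 2 - 1)`. Since `2 ∫₀¹ x dx = 1`, the value is
`2 log 2 - 1`.
-/

open MeasureTheory Real Set

theorem sqrt_mul_sub_div_sub {x y : ℝ} (hy : 0 ≤ y) (hyx : y < x) :
    (√(x * y) - y) / (x - y) = √y / (√x + √y) := by
  have hx : 0 ≤ x := hy.trans hyx.le
  have hsum : 0 < √x + √y := by
    linarith [Real.sqrt_lt_sqrt hy hyx, Real.sqrt_nonneg y]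
  rw [div_eq_div_iff (sub_pos.2 hyx).ne' hsum.ne', Real.sqrt_mul hx]
  linear_combination √y * Real.sq_sqrt hx + √x * Real.sq_sqrt hy

theorem setIntegral_add_swap {α E : Type*} [MeasurableSpace α] [NormedAddCommGroup E]
    [NormedSpace ℝ E] {μ : Measure α} [SFinite μ] {s : Set α} {f : α × α → E}
    (hf : IntegrableOn f (s ×ˢ s) (μ.prod μ)) :
    ∫ p in s ×ˢ s, (f p + f p.swap) ∂μ.prod μ = (2 : ℝ) • ∫ p in s ×ˢ s, f p ∂μ.prod μ := by
  have hswap : IntegrableOn (fun p : α × α => f p.swap) (s ×ˢ s) (μ.prod μ) := hf.swap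
  rw [integral_add hf hswap, setIntegral_prod_swap, two_smul]

noncomputable def geomOdfBelowDiag (p : ℝ × ℝ) : ℝ :=
  if p.2 < p.1 then √p.2 / (√p.1 + √p.2) else 0

theorem geomOdf_eq_add_swap {p : ℝ × ℝ} (h1 : 0 ≤ p.1) (h2 : 0 ≤ p.2) :
    (√(p.1 * p.2) - min p.1 p.2) / (max p.1 p.2 - min p.1 p.2)
      = geomOdfBelowDiag p + geomOdfBelowDiag p.swap := by
  obtain ⟨x, y⟩ := p
  simp only [geomOdfBelowDiag, Prod.swap]
  rcases lt_trichotomy x y with hxy | rfl | hyx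
  · rw [min_eq_left hxy.le, max_eq_right hxy.le, mul_comm, sqrt_mul_sub_div_sub h1 hxy,
      if_neg hxy.not_gt, if_pos hxy, zero_add]
  · -- both sides vanish, the left one because `max x x - min x x = 0` and `_ / 0 = 0`
    simp
  · rw [min_eq_right hyx.le, max_eq_left hyx.le, sqrt_mul_sub_div_sub h2 hyx,
      if_pos hyx, if_neg hyx.not_gt, add_zero]

theorem measurable_geomOdfBelowDiag : Measurable geomOdfBelowDiag :=
  Measurable.ite (measurableSet_lt measurable_snd measurable_fst) (by fun_prop) measurable_const

theorem abs_geomOdfBelowDiag_le_one (p : ℝ × ℝ) : |geomOdfBelowDiag p| ≤ 1 := by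
  unfold geomOdfBelowDiag
  split_ifs
  · rw [abs_of_nonneg (by positivity)]
    exact div_le_one_of_le₀ (le_add_of_nonneg_left (Real.sqrt_nonneg _)) (by positivity)
  · simp

theorem integrableOn_geomOdfBelowDiag {μ : Measure (ℝ × ℝ)} {s : Set (ℝ × ℝ)} (hs : μ s ≠ ⊤) :
    IntegrableOn geomOdfBelowDiag s μ :=
  Measure.integrableOn_of_bounded hs measurable_geomOdfBelowDiag.aestronglyMeasurable
    (.of_forall abs_geomOdfBelowDiag_le_one)

theorem integral_sqrt_div_one_add_sqrt :
    ∫ t in (0 : ℝ)..1, √t / (1 + √t) = 2 * log 2 - 1 := by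
  have hpos : ∀ t : ℝ, 0 < 1 + √t := fun t => by positivity
  have hderiv : ∀ t ∈ Ioo (0 : ℝ) 1,
      HasDerivAt (fun t => t - 2 * √t + 2 * log (1 + √t)) (√t / (1 + √t)) t := by
    intro t ht
    have hs : HasDerivAt (√·) (1 / (2 * √t)) t := Real.hasDerivAt_sqrt ht.1.ne'
    have hst : 0 < √t := Real.sqrt_pos.mpr ht.1
    refine (((hasDerivAt_id' t).sub (hs.const_mul 2)).add
      (((hs.const_add 1).log (hpos t).ne').const_mul 2)).congr_deriv ?_
    field_simp
    ring
  have hcont : Continuous fun t => t - 2 * √t + 2 * log (1 + √t) := by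
    have := (continuous_const.add continuous_sqrt).log fun t => (hpos t).ne'
    fun_prop
  rw [intervalIntegral.integral_eq_sub_of_hasDerivAt_of_le zero_le_one hcont.continuousOn hderiv
    ((continuous_sqrt.div (by fun_prop) fun t => (hpos t).ne').intervalIntegrable 0 1)]
  norm_num
  ring

theorem integral_sqrt_div_sqrt_add_sqrt {x : ℝ} (hx : 0 ≤ x) :
    ∫ y in (0 : ℝ)..x, √y / (√x + √y) = x * (2 * log 2 - 1) := by
  rcases hx.eq_or_lt with rfl | hx
  · simp
  have hscale : ∀ t ∈ uIcc (0 : ℝ) 1, √(x * t) / (√x + √(x * t)) = √t / (1 + √t) := by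
    intro t _
    rw [Real.sqrt_mul hx.le, show √x + √x * √t = √x * (1 + √t) by ring,
      mul_div_mul_left _ _ (Real.sqrt_pos.mpr hx).ne']
  have := intervalIntegral.mul_integral_comp_mul_left (a := 0) (b := 1)
    (f := fun y => √y / (√x + √y)) x
  simp only [mul_zero, mul_one] at this
  rw [← integral_sqrt_div_one_add_sqrt, ← intervalIntegral.integral_congr hscale, this]

theorem setIntegral_geomOdfBelowDiag_Ioo {x : ℝ} (hx0 : 0 ≤ x) (hx1 : x ≤ 1) :
    ∫ y in Ioo (0 : ℝ) 1, geomOdfBelowDiag (x, y) = x * (2 * log 2 - 1) := by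
  have hind : (fun y => geomOdfBelowDiag (x, y)) = (Iio x).indicator fun y => √y / (√x + √y) := by
    ext y
    simp [geomOdfBelowDiag, indicator]
  rw [hind, setIntegral_indicator measurableSet_Iio, Ioo_inter_Iio, min_eq_right hx1,
    ← integral_Ioc_eq_integral_Ioo, ← intervalIntegral.integral_of_le hx0,
    integral_sqrt_div_sqrt_add_sqrt hx0]

/-- The orness average value over `[0,1]²` of the geometric mean `G(x₁,x₂) = √(x₁x₂)`
equals `ln 4 − 1`. -/
theorem orness_average_geometric_mean_two :
    (∫ p in (Set.Ioo (0 : ℝ) 1) ×ˢ (Set.Ioo (0 : ℝ) 1),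
        (Real.sqrt (p.1 * p.2) - min p.1 p.2) / (max p.1 p.2 - min p.1 p.2))
      = Real.log 4 - 1 := by
  have hint : IntegrableOn geomOdfBelowDiag (Ioo (0 : ℝ) 1 ×ˢ Ioo (0 : ℝ) 1) (volume.prod volume) :=
    integrableOn_geomOdfBelowDiag (by simp [Measure.prod_prod])
  rw [Measure.volume_eq_prod]
  calc _ = ∫ p in Ioo (0 : ℝ) 1 ×ˢ Ioo (0 : ℝ) 1,
          (geomOdfBelowDiag p + geomOdfBelowDiag p.swap) ∂volume.prod volume :=
        setIntegral_congr_fun (measurableSet_Ioo.prod measurableSet_Ioo)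
          fun p hp => geomOdf_eq_add_swap hp.1.1.le hp.2.1.le
    _ = 2 * ∫ x in Ioo (0 : ℝ) 1, ∫ y in Ioo (0 : ℝ) 1, geomOdfBelowDiag (x, y) := by
        rw [setIntegral_add_swap hint, setIntegral_prod _ hint, smul_eq_mul]
    _ = 2 * ∫ x in Ioo (0 : ℝ) 1, x * (2 * log 2 - 1) := by
        rw [setIntegral_congr_fun measurableSet_Ioo
          fun x hx => setIntegral_geomOdfBelowDiag_Ioo hx.1.le hx.2.le]
    _ = log 4 - 1 := by
        rw [integral_mul_const, ← integral_Ioc_eq_integral_Ioo,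
          ← intervalIntegral.integral_of_le zero_le_one, integral_id,
          show (4 : ℝ) = 2 ^ 2 by norm_num, Real.log_pow]
        ring
end

section
/- The orness average value over [0,1]³ of the geometric mean G(x₁,x₂,x₃) = (x₁x₂x₃)^{1/3} equals (√3 π)/2 − 47/20. -/
/-!
The orness distribution of the geometric mean is invariant under permuting coordinates and the
diagonals are null, so the integral over the cube is `3!` times the integral over the region
`y < z < x`. There the integrand is `((xyz)^{1/3} - y) / (x - y)`, homogeneous of degree `0`:
integrating out the middle coordinate `z` and then `y = x t` leaves `x² ∫₀¹ P(t^{1/3}) dt`, where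
`P` is a rational function. After `t = u³` the integral of `P` is elementary; the `√3 π` comes
from `∫₀¹ du / (u² + u + 1) = π / (3√3)`. Integrating `x²` gives `1/3`, and
`3! · (1/3) · (√3 π / 4 - 47 / 40) = √3 π / 2 - 47 / 20`.
-/

open MeasureTheory Set Real

section Orness
variable {ι : Type*}

/-- Off the diagonal this is the paper's `odf_F`; on the diagonal the denominator vanishes and
the value is the junk `0`. -/
noncomputable def ornessDistribution (F : (ι → ℝ) → ℝ) (x : ι → ℝ) : ℝ :=
  (F x - ⨅ i, x i) / ((⨆ i, x i) - ⨅ i, x i)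

theorem ornessDistribution_comp_perm {F : (ι → ℝ) → ℝ}
    (hF : ∀ (σ : Equiv.Perm ι) x, F (x ∘ σ) = F x) (σ : Equiv.Perm ι) (x : ι → ℝ) :
    ornessDistribution F (x ∘ σ) = ornessDistribution F x := by
  simp only [ornessDistribution, hF, Function.comp_apply, σ.iInf_comp, σ.iSup_comp]

theorem ornessDistribution_mem_Icc {F : (ι → ℝ) → ℝ} {x : ι → ℝ} (hlo : ⨅ i, x i ≤ F x)
    (hhi : F x ≤ ⨆ i, x i) : ornessDistribution F x ∈ Icc 0 1 :=
  ⟨div_nonneg (sub_nonneg.2 hlo) (sub_nonneg.2 (hlo.trans hhi)),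
    div_le_one_of_le₀ (sub_le_sub_right hhi _) (sub_nonneg.2 (hlo.trans hhi))⟩

variable [Fintype ι]

noncomputable def geometricMean (x : ι → ℝ) : ℝ :=
  (∏ i, x i) ^ ((Fintype.card ι : ℝ)⁻¹)

theorem measurable_ornessDistribution {F : (ι → ℝ) → ℝ} (hF : Measurable F) :
    Measurable (ornessDistribution F) := by
  have hinf : Measurable fun x : ι → ℝ => ⨅ i, x i := Measurable.iInf fun i => measurable_pi_apply i
  have hsup : Measurable fun x : ι → ℝ => ⨆ i, x i := Measurable.iSup fun i => measurable_pi_apply i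
  exact (hF.sub hinf).div (hsup.sub hinf)

theorem geometricMean_comp_perm (σ : Equiv.Perm ι) (x : ι → ℝ) :
    geometricMean (x ∘ σ) = geometricMean x := by
  simp only [geometricMean, Function.comp_apply, Equiv.prod_comp]

theorem measurable_geometricMean : Measurable (geometricMean : (ι → ℝ) → ℝ) :=
  (continuous_rpow_const (by positivity)).measurable.comp
    (Finset.measurable_prod _ fun i _ => measurable_pi_apply i)

theorem iInf_le_geometricMean [Nonempty ι] {x : ι → ℝ} (hx : ∀ i, 0 ≤ x i) :
    ⨅ i, x i ≤ geometricMean x := by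
  have hm : 0 ≤ ⨅ i, x i := le_ciInf hx
  calc ⨅ i, x i = ((⨅ i, x i) ^ Fintype.card ι) ^ ((Fintype.card ι : ℝ)⁻¹) :=
        (pow_rpow_inv_natCast hm Fintype.card_ne_zero).symm
    _ ≤ geometricMean x := by
        rw [← Finset.card_univ, ← Finset.prod_const]
        exact rpow_le_rpow (by positivity)
          (Finset.prod_le_prod (fun _ _ => hm) fun i _ => ciInf_le (Finite.bddBelow_range x) i)
          (by positivity)

theorem geometricMean_le_iSup [Nonempty ι] {x : ι → ℝ} (hx : ∀ i, 0 ≤ x i) :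
    geometricMean x ≤ ⨆ i, x i := by
  have hM : 0 ≤ ⨆ i, x i :=
    (hx (Classical.arbitrary ι)).trans (le_ciSup (Finite.bddAbove_range x) _)
  calc geometricMean x ≤ ((⨆ i, x i) ^ Fintype.card ι) ^ ((Fintype.card ι : ℝ)⁻¹) := by
        rw [← Finset.card_univ, ← Finset.prod_const]
        exact rpow_le_rpow (Finset.prod_nonneg fun i _ => hx i)
          (Finset.prod_le_prod (fun i _ => hx i) fun i _ => le_ciSup (Finite.bddAbove_range x) i)
          (by positivity)
    _ = ⨆ i, x i := pow_rpow_inv_natCast hM Fintype.card_ne_zero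

theorem integrableOn_ornessDistribution_geometricMean [Nonempty ι] :
    IntegrableOn (ornessDistribution geometricMean) (univ.pi fun _ : ι => Ioo (0 : ℝ) 1) := by
  refine Measure.integrableOn_of_bounded (M := 1) (by simp [Real.volume_pi_Ioo])
    (measurable_ornessDistribution measurable_geometricMean).aestronglyMeasurable
    ((ae_restrict_iff' (MeasurableSet.univ_pi fun _ => measurableSet_Ioo)).2 (ae_of_all _ ?_))
  intro x hx
  have hx0 : ∀ i, 0 ≤ x i := fun i => (hx i (mem_univ i)).1.le
  have h := ornessDistribution_mem_Icc (iInf_le_geometricMean hx0) (geometricMean_le_iSup hx0)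
  rw [Real.norm_eq_abs, abs_le]
  exact ⟨by linarith [h.1], h.2⟩

end Orness

namespace Tuple
variable {α : Type*} [LinearOrder α] {n : ℕ}

theorem perm_eq_of_strictMono_comp {x : Fin n → α} {σ τ : Equiv.Perm (Fin n)}
    (hσ : StrictMono (x ∘ σ)) (hτ : StrictMono (x ∘ τ)) : σ = τ := by
  have hx : Function.Injective x := by
    simpa using hσ.injective.comp σ.symm.injective
  ext i
  exact congrArg Fin.val (hx (congrFun (unique_monotone hσ.monotone hτ.monotone) i))

theorem strictMono_comp_sort {x : Fin n → α} (hx : Function.Injective x) :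
    StrictMono (x ∘ sort x) :=
  (monotone_sort x).strictMono_of_injective (hx.comp (sort x).injective)

end Tuple

theorem volume_setOf_not_injective (n : ℕ) :
    volume {x : Fin n → ℝ | ¬ Function.Injective x} = 0 := by
  have hsub : {x : Fin n → ℝ | ¬ Function.Injective x} ⊆
      ⋃ i, ⋃ j, ⋃ (_ : i ≠ j), (LinearMap.ker ((LinearMap.proj i : (Fin n → ℝ) →ₗ[ℝ] ℝ) -
        LinearMap.proj j) : Set (Fin n → ℝ)) := by
    intro x hx
    simp only [Function.Injective, not_forall] at hx
    obtain ⟨i, j, hij, hne⟩ := hx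
    simp only [mem_iUnion, SetLike.mem_coe, LinearMap.mem_ker]
    exact ⟨i, j, hne, by simp [hij]⟩
  refine measure_mono_null hsub (measure_iUnion_null fun i => measure_iUnion_null fun j =>
    measure_iUnion_null fun hij => Measure.addHaar_submodule _ _ fun htop => hij ?_)
  have := htop ▸ Submodule.mem_top (x := Pi.single i (1 : ℝ))
  by_contra hne
  simp [eq_comm, hne] at this

theorem measurableSet_setOf_strictMono_comp {n : ℕ} (σ : Equiv.Perm (Fin n)) :
    MeasurableSet {x : Fin n → ℝ | StrictMono (x ∘ σ)} := by
  simp only [StrictMono, Function.comp_apply, ofPred_forall]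
  exact MeasurableSet.iInter fun i => MeasurableSet.iInter fun j => MeasurableSet.iInter fun _ =>
    measurableSet_lt (measurable_pi_apply _) (measurable_pi_apply _)

theorem measurePreserving_comp_perm {n : ℕ} (σ : Equiv.Perm (Fin n)) :
    MeasurePreserving (fun x : Fin n → ℝ => x ∘ σ) := by
  have := volume_preserving_arrowCongr' σ.symm (MeasurableEquiv.refl ℝ) (MeasurePreserving.id _)
  convert this using 1
  ext x i
  simp [MeasurableEquiv.arrowCongr', Equiv.arrowCongr']

theorem setIntegral_eq_factorial_mul_setIntegral_strictMono_comp {n : ℕ}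
    {f : (Fin n → ℝ) → ℝ} {S : Set (Fin n → ℝ)} (hS : MeasurableSet S)
    (hSσ : ∀ (σ : Equiv.Perm (Fin n)) x, x ∘ σ ∈ S ↔ x ∈ S)
    (hfσ : ∀ (σ : Equiv.Perm (Fin n)) x, f (x ∘ σ) = f x) (hf : IntegrableOn f S)
    (τ : Equiv.Perm (Fin n)) :
    ∫ x in S, f x = n.factorial * ∫ x in S ∩ {x | StrictMono (x ∘ τ)}, f x := by
  set R : Equiv.Perm (Fin n) → Set (Fin n → ℝ) := fun σ => S ∩ {x | StrictMono (x ∘ σ)}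
  have hR : ∀ σ, MeasurableSet (R σ) := fun σ => hS.inter (measurableSet_setOf_strictMono_comp σ)
  have hcover : S =ᵐ[volume] ⋃ σ, R σ := by
    refine ae_eq_set.2 ⟨?_, by
      rw [sdiff_eq_empty.2 (iUnion_subset fun σ => inter_subset_left), measure_empty]⟩
    refine measure_mono_null (fun x hx => ?_) (volume_setOf_not_injective n)
    intro hinj
    exact hx.2 (mem_iUnion.2 ⟨Tuple.sort x, hx.1, Tuple.strictMono_comp_sort hinj⟩)
  have hdisj : Pairwise (Function.onFun Disjoint R) := fun σ σ' hne =>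
    disjoint_left.2 fun x hx hx' => hne (Tuple.perm_eq_of_strictMono_comp hx.2 hx'.2)
  have hsame : ∀ σ, ∫ x in R σ, f x = ∫ x in R τ, f x := by
    intro σ
    have hpre : (fun x : Fin n → ℝ => x ∘ (σ * τ⁻¹)) ⁻¹' R τ = R σ := by
      ext x
      simp only [R, mem_preimage, mem_inter_iff, hSσ, mem_ofPred_eq]
      rw [show (x ∘ ⇑(σ * τ⁻¹)) ∘ ⇑τ = x ∘ σ by ext; simp]
    calc ∫ x in R σ, f x = ∫ x in (fun x => x ∘ ⇑(σ * τ⁻¹)) ⁻¹' R τ, f (x ∘ ⇑(σ * τ⁻¹)) := by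
          simp_rw [hpre, hfσ]
      _ = ∫ x in R τ, f x := (measurePreserving_comp_perm _).setIntegral_preimage_emb
          (MeasurableEquiv.arrowCongr' (σ * τ⁻¹).symm (.refl ℝ)).measurableEmbedding _ _
  rw [setIntegral_congr_set hcover, integral_iUnion_fintype hR hdisj
    fun σ => hf.mono_set inter_subset_left]
  simp [hsame, Fintype.card_perm, R]

theorem indicator_section_of_mem {α β M : Type*} [Zero M] {s : Set α} {t : α → Set β}
    (f : α × β → M) {x : α} (hx : x ∈ s) :
    (fun y => {p : α × β | p.1 ∈ s ∧ p.2 ∈ t p.1}.indicator f (x, y)) =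
      (t x).indicator fun y => f (x, y) := by
  ext y
  by_cases hy : y ∈ t x <;> simp [indicator, hx, hy]

section Sections
variable {α β γ E : Type*} [MeasurableSpace α] [MeasurableSpace β] [MeasurableSpace γ]
  [NormedAddCommGroup E] {μ : Measure α} {ν : Measure β} {ρ : Measure γ}
  [SFinite μ] [SFinite ν] [SFinite ρ] {s : Set α} {t : α → Set β}

theorem measurableSet_section_of_mem (hst : MeasurableSet {p : α × β | p.1 ∈ s ∧ p.2 ∈ t p.1})
    {x : α} (hx : x ∈ s) : MeasurableSet (t x) := by
  simpa [hx] using measurable_prodMk_left (x := x) hst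

theorem ae_integrableOn_section {f : α × β → E}
    (hst : MeasurableSet {p : α × β | p.1 ∈ s ∧ p.2 ∈ t p.1})
    (hf : IntegrableOn f {p : α × β | p.1 ∈ s ∧ p.2 ∈ t p.1} (μ.prod ν)) :
    ∀ᵐ x ∂μ, x ∈ s → IntegrableOn (fun y => f (x, y)) (t x) ν := by
  filter_upwards [(hf.integrable_indicator hst).prod_right_ae] with x hx hxs
  rwa [indicator_section_of_mem f hxs, integrable_indicator_iff
    (measurableSet_section_of_mem hst hxs)] at hx

variable [NormedSpace ℝ E]

theorem setIntegral_prod_of_sections {f : α × β → E} (hs : MeasurableSet s)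
    (hst : MeasurableSet {p : α × β | p.1 ∈ s ∧ p.2 ∈ t p.1})
    (hf : IntegrableOn f {p : α × β | p.1 ∈ s ∧ p.2 ∈ t p.1} (μ.prod ν)) :
    ∫ p in {p : α × β | p.1 ∈ s ∧ p.2 ∈ t p.1}, f p ∂μ.prod ν =
      ∫ x in s, ∫ y in t x, f (x, y) ∂ν ∂μ := by
  rw [← integral_indicator hst, integral_prod _ (hf.integrable_indicator hst),
    ← integral_indicator hs]
  congr 1
  ext x
  by_cases hx : x ∈ s
  · rw [indicator_of_mem hx, indicator_section_of_mem f hx,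
      integral_indicator (measurableSet_section_of_mem hst hx)]
  · simp [indicator, hx]

theorem setIntegral_prod_prod_of_sections {u : α → β → Set γ} {f : α × β × γ → E}
    (hs : MeasurableSet s) (ht : ∀ x, MeasurableSet (t x))
    (hstu : MeasurableSet {p : α × β × γ | p.1 ∈ s ∧ p.2.1 ∈ t p.1 ∧ p.2.2 ∈ u p.1 p.2.1})
    (hf : IntegrableOn f {p : α × β × γ | p.1 ∈ s ∧ p.2.1 ∈ t p.1 ∧ p.2.2 ∈ u p.1 p.2.1}
      (μ.prod (ν.prod ρ))) :
    ∫ p in {p : α × β × γ | p.1 ∈ s ∧ p.2.1 ∈ t p.1 ∧ p.2.2 ∈ u p.1 p.2.1}, f p ∂μ.prod (ν.prod ρ) =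
      ∫ x in s, ∫ y in t x, ∫ z in u x y, f (x, y, z) ∂ρ ∂ν ∂μ := by
  let tu : α → Set (β × γ) := fun x => {q | q.1 ∈ t x ∧ q.2 ∈ u x q.1}
  refine (setIntegral_prod_of_sections (t := tu) hs hstu hf).trans
    (setIntegral_congr_ae hs ?_)
  filter_upwards [ae_integrableOn_section (t := tu) hstu hf] with x hx hxs
  exact setIntegral_prod_of_sections (ht x) (measurableSet_section_of_mem (t := tu) hstu hxs)
    (hx hxs)

end Sections

noncomputable def finThreeEquiv : (ℝ × ℝ × ℝ) ≃ᵐ (Fin 3 → ℝ) :=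
  ((MeasurableEquiv.refl ℝ).prodCongr (MeasurableEquiv.piFinTwo fun _ => ℝ).symm).trans
    (MeasurableEquiv.piFinSuccAbove (fun _ => ℝ) 0).symm

theorem finThreeEquiv_apply (x y z : ℝ) : finThreeEquiv (x, y, z) = ![x, y, z] := by
  ext i; fin_cases i <;> rfl

theorem measurePreserving_finThreeEquiv : MeasurePreserving finThreeEquiv :=
  ((volume_preserving_piFinSuccAbove (fun _ => ℝ) 0).symm _).comp
    ((MeasurePreserving.id volume).prod ((volume_preserving_piFinTwo fun _ => ℝ).symm _))

theorem finThreeEquiv_preimage_cube_inter_strictMono :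
    finThreeEquiv ⁻¹' ((univ.pi fun _ => Ioo (0 : ℝ) 1) ∩ {x | StrictMono (x ∘ finRotate 3)}) =
      {p : ℝ × ℝ × ℝ | p.1 ∈ Ioo 0 1 ∧ p.2.1 ∈ Ioo 0 p.1 ∧ p.2.2 ∈ Ioo p.2.1 p.1} := by
  ext ⟨x, y, z⟩
  have h0 : finRotate 3 0 = 1 := rfl
  have h1 : finRotate 3 1 = 2 := rfl
  have h2 : finRotate 3 2 = 0 := rfl
  simp only [mem_preimage, finThreeEquiv_apply, mem_inter_iff, mem_univ_pi, Fin.forall_fin_succ,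
    mem_ofPred_eq, Fin.strictMono_iff_lt_succ, Function.comp_apply, Fin.castSucc_zero,
    Fin.succ_zero_eq_one, Fin.castSucc_one, Fin.succ_one_eq_two, h0, h1, h2, Matrix.cons_val_zero,
    Matrix.cons_val_one, Matrix.cons_val_two, mem_Ioo, IsEmpty.forall_iff, and_true]
  constructor
  · rintro ⟨⟨hx, hy, -⟩, hyz, hzx⟩
    exact ⟨hx, ⟨hy.1, hyz.trans hzx⟩, hyz, hzx⟩
  · rintro ⟨hx, hy, hyz, hzx⟩
    exact ⟨⟨hx, ⟨hy.1, hy.2.trans hx.2⟩, hy.1.trans hyz, hzx.trans hx.2⟩, hyz, hzx⟩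

theorem setIntegral_cube_inter_strictMono_finRotate {g : (Fin 3 → ℝ) → ℝ}
    (hg : IntegrableOn g ((univ.pi fun _ => Ioo (0 : ℝ) 1) ∩ {x | StrictMono (x ∘ finRotate 3)})) :
    ∫ x in (univ.pi fun _ => Ioo (0 : ℝ) 1) ∩ {x | StrictMono (x ∘ finRotate 3)}, g x =
      ∫ x in Ioo (0 : ℝ) 1, ∫ y in Ioo 0 x, ∫ z in Ioo y x, g ![x, y, z] := by
  have hpre := finThreeEquiv_preimage_cube_inter_strictMono
  have hmeas :
      MeasurableSet {p : ℝ × ℝ × ℝ | p.1 ∈ Ioo 0 1 ∧ p.2.1 ∈ Ioo 0 p.1 ∧ p.2.2 ∈ Ioo p.2.1 p.1} :=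
    hpre ▸ finThreeEquiv.measurable ((MeasurableSet.univ_pi fun _ => measurableSet_Ioo).inter
      (measurableSet_setOf_strictMono_comp _))
  rw [← measurePreserving_finThreeEquiv.setIntegral_preimage_emb finThreeEquiv.measurableEmbedding,
    hpre]
  have hg' := (measurePreserving_finThreeEquiv.integrableOn_comp_preimage
    finThreeEquiv.measurableEmbedding).2 hg
  rw [hpre, Measure.volume_eq_prod, Measure.volume_eq_prod] at hg'
  have key := setIntegral_prod_prod_of_sections (s := Ioo 0 1) (t := fun x => Ioo 0 x)
    (u := fun x y => Ioo y x) measurableSet_Ioo (fun _ => measurableSet_Ioo) hmeas hg'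
  rw [← Measure.volume_eq_prod, ← Measure.volume_eq_prod] at key
  simpa only [Function.comp_apply, finThreeEquiv_apply] using key

theorem setIntegral_Ioo_eq_intervalIntegral {f : ℝ → ℝ} {a b : ℝ} (hab : a ≤ b) :
    ∫ x in Ioo a b, f x = ∫ x in a..b, f x := by
  rw [intervalIntegral.integral_of_le hab, integral_Ioc_eq_integral_Ioo]

theorem one_add_add_sq_pos (u : ℝ) : 0 < 1 + u + u ^ 2 := by nlinarith [sq_nonneg (u + 1 / 2)]

/-- For `t = u³ ∈ [0, 1)`, the integral over `s ∈ (t, 1)` of `((t s)^{1/3} - t) / (1 - t)`, the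
orness distribution at `(1, t, s)`; see `integral_orness_slice`. -/
noncomputable def ornessProfile (u : ℝ) : ℝ :=
  u * (3 * (1 + u) * (1 + u ^ 2) - 4 * u ^ 2 * (1 + u + u ^ 2)) / (4 * (1 + u + u ^ 2))

theorem continuous_ornessProfile : Continuous ornessProfile :=
  Continuous.div (by fun_prop) (by fun_prop) fun u => by nlinarith [one_add_add_sq_pos u]

noncomputable def ornessProfilePrimitive (u : ℝ) : ℝ :=
  9 / 4 * (u ^ 5 / 5 + u ^ 2 / 2 - u + 2 / √3 * arctan ((2 * u + 1) / √3)) - u ^ 6 / 2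

theorem hasDerivAt_ornessProfilePrimitive (u : ℝ) :
    HasDerivAt ornessProfilePrimitive (ornessProfile u * (3 * u ^ 2)) u := by
  have harctan : HasDerivAt (fun u => arctan ((2 * u + 1) / √3))
      (1 / (1 + ((2 * u + 1) / √3) ^ 2) * (2 / √3)) u :=
    (hasDerivAt_arctan _).comp u
      ((((hasDerivAt_id u).const_mul 2).add_const 1).div_const √3 |>.congr_deriv (by ring))
  refine ((((((hasDerivAt_pow 5 u).div_const 5).add ((hasDerivAt_pow 2 u).div_const 2)).sub
    (hasDerivAt_id u)).add (harctan.const_mul (2 / √3))).const_mul (9 / 4)).sub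
    ((hasDerivAt_pow 6 u).div_const 2) |>.congr_deriv ?_
  have hq := one_add_add_sq_pos u
  have h3 : √3 ^ 2 = 3 := sq_sqrt (by norm_num)
  rw [ornessProfile, div_pow, h3]
  field_simp
  linear_combination (-360 * (1 + u + u ^ 2)) * h3

theorem integral_ornessProfile_mul :
    ∫ u in (0 : ℝ)..1, ornessProfile u * (3 * u ^ 2) = √3 * π / 4 - 47 / 40 := by
  rw [intervalIntegral.integral_eq_sub_of_hasDerivAt
    (fun u _ => hasDerivAt_ornessProfilePrimitive u)
    ((continuous_ornessProfile.mul (by fun_prop)).intervalIntegrable _ _)]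
  have h1 : (2 * 1 + 1 : ℝ) / √3 = √3 := by
    rw [div_eq_iff (by positivity)]; norm_num
  have h0 : (2 * 0 + 1 : ℝ) / √3 = (√3)⁻¹ := by norm_num
  simp only [ornessProfilePrimitive, h1, h0, arctan_sqrt_three, arctan_inv_sqrt_three]
  have h3 : √3 ^ 2 = 3 := sq_sqrt (by norm_num)
  field_simp
  linear_combination (-7200 * π) * h3

theorem pow_three_rpow_one_div_three {u : ℝ} (hu : 0 ≤ u) : (u ^ 3) ^ ((1 : ℝ) / 3) = u := by
  rw [← rpow_natCast, ← rpow_mul hu]; norm_num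

theorem integral_ornessProfile_rpow :
    ∫ t in (0 : ℝ)..1, ornessProfile (t ^ ((1 : ℝ) / 3)) = √3 * π / 4 - 47 / 40 := by
  have hsub := intervalIntegral.integral_comp_mul_deriv (a := 0) (b := 1)
    (g := fun t => ornessProfile (t ^ ((1 : ℝ) / 3)))
    (fun u _ => by simpa using hasDerivAt_pow 3 u)
    (by fun_prop : Continuous fun u : ℝ => 3 * u ^ 2).continuousOn
    (continuous_ornessProfile.comp (continuous_rpow_const (by norm_num)))
  rw [← integral_ornessProfile_mul]
  norm_num at hsub
  rw [← hsub]
  refine intervalIntegral.integral_congr fun u hu => ?_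
  rw [uIcc_of_le zero_le_one] at hu
  rw [pow_three_rpow_one_div_three hu.1]

theorem integral_orness_slice {t : ℝ} (ht0 : 0 ≤ t) (ht1 : t < 1) :
    ∫ s in t..1, ((t * s) ^ ((1 : ℝ) / 3) - t) / (1 - t) = ornessProfile (t ^ ((1 : ℝ) / 3)) := by
  have hsplit : EqOn (fun s => ((t * s) ^ ((1 : ℝ) / 3) - t) / (1 - t))
      (fun s => (t ^ ((1 : ℝ) / 3) * s ^ ((1 : ℝ) / 3) - t) / (1 - t)) (uIcc t 1) := by
    intro s hs
    rw [uIcc_of_le ht1.le] at hs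
    simp only [mul_rpow ht0 (ht0.trans hs.1)]
  rw [intervalIntegral.integral_congr hsplit, intervalIntegral.integral_div,
    intervalIntegral.integral_sub
      ((intervalIntegral.intervalIntegrable_rpow' (by norm_num)).const_mul _)
      intervalIntegrable_const, intervalIntegral.integral_const_mul,
    integral_rpow (Or.inl (by norm_num)), intervalIntegral.integral_const]
  set u := t ^ ((1 : ℝ) / 3) with hu
  have ht : t = u ^ 3 := by rw [hu, ← rpow_natCast, ← rpow_mul ht0]; norm_num
  have ht43 : t ^ ((1 : ℝ) / 3 + 1) = u ^ 4 := by
    rw [rpow_add_one' ht0 (by norm_num), ← hu, ht]; ring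
  have hq := one_add_add_sq_pos u
  rw [ht43, one_rpow, ornessProfile, smul_eq_mul]
  rw [ht] at ht1 ⊢
  have h1 : 1 - u ^ 3 ≠ 0 := by linarith
  field_simp
  ring

theorem ornessDistribution_geometricMean_fin_three (x : Fin 3 → ℝ) :
    ornessDistribution geometricMean x =
      ((x 0 * x 1 * x 2) ^ ((1 : ℝ) / 3) - min (x 0) (min (x 1) (x 2))) /
        (max (x 0) (max (x 1) (x 2)) - min (x 0) (min (x 1) (x 2))) := by
  simp [ornessDistribution, geometricMean, ← Finset.inf'_univ_eq_ciInf,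
    ← Finset.sup'_univ_eq_ciSup, Fin.univ_succ, mul_assoc]

theorem ornessDistribution_geometricMean_of_lt {x y z : ℝ} (hy : 0 < y) (hyz : y < z)
    (hzx : z < x) :
    ornessDistribution geometricMean ![x, y, z] =
      ((y / x * (z / x)) ^ ((1 : ℝ) / 3) - y / x) / (1 - y / x) := by
  have hz : 0 < z := hy.trans hyz
  have hx : 0 < x := hz.trans hzx
  have hscale : (x * y * z) ^ ((1 : ℝ) / 3) = x * (y / x * (z / x)) ^ ((1 : ℝ) / 3) := by
    rw [show x * y * z = x ^ 3 * (y / x * (z / x)) by field_simp,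
      mul_rpow (by positivity) (by positivity), pow_three_rpow_one_div_three hx.le]
  rw [ornessDistribution_geometricMean_fin_three]
  simp only [Matrix.cons_val_zero, Matrix.cons_val_one, Matrix.cons_val_two, Matrix.head_cons,
    Matrix.tail_cons, min_eq_left hyz.le, min_eq_right (hyz.trans hzx).le, max_eq_right hyz.le,
    max_eq_left hzx.le, hscale]
  field_simp

theorem integral_ornessDistribution_geometricMean_middle {x y : ℝ} (hy : 0 < y) (hyx : y < x) :
    ∫ z in Ioo y x, ornessDistribution geometricMean ![x, y, z] =
      x * ornessProfile ((y / x) ^ ((1 : ℝ) / 3)) := by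
  have hx : 0 < x := hy.trans hyx
  rw [setIntegral_congr_fun measurableSet_Ioo fun z hz =>
      ornessDistribution_geometricMean_of_lt hy hz.1 hz.2,
    setIntegral_Ioo_eq_intervalIntegral hyx.le,
    intervalIntegral.integral_comp_div
      (fun s => ((y / x * s) ^ ((1 : ℝ) / 3) - y / x) / (1 - y / x)) hx.ne', div_self hx.ne',
    integral_orness_slice (by positivity) ((div_lt_one hx).2 hyx), smul_eq_mul]

theorem integral_ornessDistribution_geometricMean_sorted :
    ∫ x in Ioo (0 : ℝ) 1, ∫ y in Ioo 0 x, ∫ z in Ioo y x,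
        ornessDistribution geometricMean ![x, y, z] = (√3 * π / 4 - 47 / 40) / 3 := by
  have hinner : ∀ x ∈ Ioo (0 : ℝ) 1,
      ∫ y in Ioo 0 x, ∫ z in Ioo y x, ornessDistribution geometricMean ![x, y, z] =
        x ^ 2 * (√3 * π / 4 - 47 / 40) := by
    rintro x ⟨hx, -⟩
    rw [setIntegral_congr_fun measurableSet_Ioo fun y hy =>
        integral_ornessDistribution_geometricMean_middle hy.1 hy.2,
      setIntegral_Ioo_eq_intervalIntegral hx.le, intervalIntegral.integral_const_mul,
      intervalIntegral.integral_comp_div (fun t => ornessProfile (t ^ ((1 : ℝ) / 3))) hx.ne',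
      zero_div, div_self hx.ne', integral_ornessProfile_rpow, smul_eq_mul]
    ring
  rw [setIntegral_congr_fun measurableSet_Ioo hinner,
    setIntegral_Ioo_eq_intervalIntegral zero_le_one, intervalIntegral.integral_mul_const,
    integral_pow]
  ring

/-- The orness average value over `[0,1]³` of the geometric mean `G(x₁,x₂,x₃) = (x₁x₂x₃)^{1/3}`
equals `√3 π/2 − 47/20`. -/
theorem orness_average_geometric_mean_three :
    (∫ x in Set.univ.pi fun _ : Fin 3 => Set.Ioo (0 : ℝ) 1,
        ((x 0 * x 1 * x 2) ^ ((1 : ℝ) / 3) - min (x 0) (min (x 1) (x 2))) /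
          (max (x 0) (max (x 1) (x 2)) - min (x 0) (min (x 1) (x 2))))
      = Real.sqrt 3 * Real.pi / 2 - 47 / 20 := by
  have hcube : ∀ (σ : Equiv.Perm (Fin 3)) (x : Fin 3 → ℝ),
      x ∘ σ ∈ univ.pi (fun _ => Ioo (0 : ℝ) 1) ↔ x ∈ univ.pi fun _ => Ioo (0 : ℝ) 1 := by
    intro σ x
    simp only [mem_univ_pi, Function.comp_apply]
    exact σ.forall_congr_right (q := fun i => x i ∈ Ioo 0 1)
  have hint := integrableOn_ornessDistribution_geometricMean (ι := Fin 3)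
  simp_rw [← ornessDistribution_geometricMean_fin_three]
  rw [setIntegral_eq_factorial_mul_setIntegral_strictMono_comp
      (MeasurableSet.univ_pi fun _ => measurableSet_Ioo) hcube
      (ornessDistribution_comp_perm geometricMean_comp_perm) hint (finRotate 3),
    setIntegral_cube_inter_strictMono_finRotate (hint.mono_set inter_subset_left),
    integral_ornessDistribution_geometricMean_sorted]
  norm_num
  ring
end

section
/- For every integer n ≥ 3, ∫_0^1 ∫_0^v (v^{1+1/n} − u^{1+1/n})^{n−2} u^{1/n} v^{1/n} / (v − u) du dv = ∫_0^1 x^n (1 − x^{n+1})^{n−2} / (1 − x^n) dx. -/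
/-!
The integrand `K(v, u)` of the inner integral is homogeneous of degree `n - 2`, so the
substitution `u = v t` turns the inner integral into `v ^ (n - 1) * ∫₀¹ K(1, t) dt` and the
double integral into `(1 / n) ∫₀¹ K(1, t) dt`. The substitution `t = x ^ n` then turns
`∫₀¹ K(1, t) dt` into `n` times the right-hand side. Both substitutions are valid for Bochner
integrals without any integrability assumption.
-/

open MeasureTheory Set

section Substitution

variable {E : Type*} [NormedAddCommGroup E] [NormedSpace ℝ E]

theorem setIntegral_Ioo_zero_eq_smul_setIntegral_comp_mul {v : ℝ} (hv : 0 < v) (f : ℝ → E) :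
    ∫ u in Ioo 0 v, f u = v • ∫ t in Ioo 0 1, f (v * t) := by
  have himage : (v * ·) '' Ioo 0 1 = Ioo 0 v := by
    simp [image_mul_left_Ioo hv]
  rw [← himage, integral_image_eq_integral_abs_deriv_smul measurableSet_Ioo
    (fun t _ => (hasDerivAt_const_mul v).hasDerivWithinAt)
    (mul_right_injective₀ hv.ne').injOn, abs_of_pos hv, integral_smul]

theorem setIntegral_Ioo_zero_one_eq_setIntegral_comp_pow {n : ℕ} (hn : n ≠ 0) (f : ℝ → E) :
    ∫ y in Ioo 0 1, f y = ∫ x in Ioo 0 1, ((n : ℝ) * x ^ (n - 1)) • f (x ^ n) := by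
  have hmono : StrictMonoOn (· ^ n : ℝ → ℝ) (Icc 0 1) :=
    (pow_left_strictMonoOn₀ hn).mono fun x hx => hx.1
  have himage : (· ^ n : ℝ → ℝ) '' Ioo 0 1 = Ioo 0 1 := by
    simpa [zero_pow hn] using
      (continuous_pow n).continuousOn.image_Ioo_of_strictMonoOn zero_le_one hmono
  conv_lhs => rw [← himage]
  rw [integral_image_eq_integral_abs_deriv_smul measurableSet_Ioo
    (fun x _ => (hasDerivAt_pow n x).hasDerivWithinAt) (hmono.injOn.mono Ioo_subset_Icc_self)]
  refine setIntegral_congr_fun measurableSet_Ioo fun x hx => ?_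
  rw [abs_of_pos (mul_pos (Nat.cast_pos.2 (Nat.pos_of_ne_zero hn)) (pow_pos hx.1 _))]

end Substitution

theorem setIntegral_Ioo_zero_one_pow (k : ℕ) : ∫ x in Ioo (0 : ℝ) 1, x ^ k = 1 / (k + 1) := by
  rw [← integral_Ioc_eq_integral_Ioo, ← intervalIntegral.integral_of_le zero_le_one, integral_pow]
  simp

noncomputable def triangleKernel (n : ℕ) (v u : ℝ) : ℝ :=
  (v ^ (1 + 1 / (n : ℝ)) - u ^ (1 + 1 / (n : ℝ))) ^ (n - 2) * u ^ (1 / (n : ℝ)) *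
    v ^ (1 / (n : ℝ)) / (v - u)

theorem triangleKernel_mul_left {n : ℕ} (hn : 2 ≤ n) {v t : ℝ} (hv : 0 < v) (ht : 0 ≤ t) :
    triangleKernel n v (v * t) = v ^ (n - 2) * triangleKernel n 1 t := by
  obtain ⟨m, rfl⟩ : ∃ m, n = m + 2 := ⟨n - 2, by omega⟩
  have hva : v ^ (1 + 1 / ((m + 2 : ℕ) : ℝ)) = v * v ^ (1 / ((m + 2 : ℕ) : ℝ)) := by
    rw [Real.rpow_add hv, Real.rpow_one]
  have hwv : (v ^ (1 / ((m + 2 : ℕ) : ℝ))) ^ (m + 2) = v := by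
    rw [one_div, Real.rpow_inv_natCast_pow hv.le (by omega)]
  have hw0 : v ^ (1 / ((m + 2 : ℕ) : ℝ)) ≠ 0 := by positivity
  simp only [triangleKernel, Real.mul_rpow hv.le ht, hva, Real.one_rpow, Nat.add_sub_cancel,
    ← mul_one_sub, mul_pow]
  generalize v ^ (1 / ((m + 2 : ℕ) : ℝ)) = w at hwv hw0 ⊢
  subst hwv
  field_simp
  ring

theorem setIntegral_triangleKernel {n : ℕ} (hn : 2 ≤ n) {v : ℝ} (hv : 0 < v) :
    ∫ u in Ioo 0 v, triangleKernel n v u = v ^ (n - 1) * ∫ t in Ioo 0 1, triangleKernel n 1 t := by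
  rw [setIntegral_Ioo_zero_eq_smul_setIntegral_comp_mul hv,
    setIntegral_congr_fun measurableSet_Ioo fun t ht => triangleKernel_mul_left hn hv ht.1.le,
    integral_const_mul, smul_eq_mul, ← mul_assoc, ← pow_succ', show n - 2 + 1 = n - 1 by omega]

theorem triangleKernel_one_pow {n : ℕ} (hn : n ≠ 0) {x : ℝ} (hx : 0 ≤ x) :
    triangleKernel n 1 (x ^ n) = (1 - x ^ (n + 1)) ^ (n - 2) * x / (1 - x ^ n) := by
  have hroot : (x ^ n) ^ (1 / (n : ℝ)) = x := by
    rw [one_div, Real.pow_rpow_inv_natCast hx hn]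
  have hpow : (x ^ n) ^ (1 + 1 / (n : ℝ)) = x ^ (n + 1) := by
    rw [Real.rpow_add' (by positivity) (by positivity), Real.rpow_one, hroot, pow_succ]
  simp only [triangleKernel, hroot, hpow, Real.one_rpow, mul_one]

/-- For every integer `n ≥ 3`,
`∫_0^1 ∫_0^v (v^{1+1/n} − u^{1+1/n})^{n−2} u^{1/n} v^{1/n}/(v−u) du dv
  = ∫_0^1 xⁿ(1−x^{n+1})^{n−2}/(1−xⁿ) dx`. -/
theorem double_integral_eq_single_integral (n : ℕ) (hn : 3 ≤ n) :
    (∫ v in Set.Ioo (0 : ℝ) 1, ∫ u in Set.Ioo (0 : ℝ) v,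
        (v ^ (1 + 1 / (n : ℝ)) - u ^ (1 + 1 / (n : ℝ))) ^ (n - 2) *
            u ^ (1 / (n : ℝ)) * v ^ (1 / (n : ℝ)) / (v - u))
      = ∫ x in Set.Ioo (0 : ℝ) 1, x ^ n * (1 - x ^ (n + 1)) ^ (n - 2) / (1 - x ^ n) := by
  have hn0 : n ≠ 0 := by omega
  set C := ∫ t in Ioo (0 : ℝ) 1, triangleKernel n 1 t
  calc _ = ∫ v in Ioo (0 : ℝ) 1, v ^ (n - 1) * C :=
        setIntegral_congr_fun measurableSet_Ioo fun v hv =>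
          setIntegral_triangleKernel (by omega) hv.1
    _ = C / n := by
        rw [integral_mul_const, setIntegral_Ioo_zero_one_pow, Nat.cast_pred (by omega),
          sub_add_cancel, one_div_mul_eq_div]
    _ = (∫ x in Ioo (0 : ℝ) 1, (n * x ^ (n - 1)) * triangleKernel n 1 (x ^ n)) / n :=
        congrArg (· / (n : ℝ)) (setIntegral_Ioo_zero_one_eq_setIntegral_comp_pow hn0 _)
    _ = _ := by
        rw [← integral_div]
        refine setIntegral_congr_fun measurableSet_Ioo fun x hx => ?_
        rw [triangleKernel_one_pow hn0 hx.1.le, ← pow_sub_one_mul hn0 x]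
        field_simp
end

section
/- Let n ≥ 2, let 0 ≤ u < v ≤ 1, let a : 2^{{1,…,n}} → ℝ with a(∅) = 0, let C_a(x) = Σ_{S ⊆ {1,…,n}} a(S) min_{i ∈ S} x_i, and let j ≠ k in {1,…,n}. Then ∫_{(u,v)^{n−2}} C_a(x | x_j = u, x_k = v) ∏_{i ∉ {j,k}} dx_i = (v−u)^{n−2} ( Σ_{S ∋ j} a(S) u + Σ_{S ∌ j, S ∋ k} a(S) (u(|S|−1) + v)/|S| + Σ_{S ∌ j, S ∌ k} a(S) (u|S| + v)/(|S|+1) ), where in the last sum only nonempty S are counted. -/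
/-!
On the box, `x_j = u` is the smallest coordinate of `(y | x_j = u, x_k = v)` and `x_k = v` the
largest. So the minimum over `S` is `u` when `j ∈ S`, and otherwise the minimum of the
`m = |S \ {k}|` free coordinates in `S` (or `v` if there are none). The mean of the minimum of
`m` independent uniform variables on `(u, v)` is `u + (v - u) / (m + 1)`: writing
`min y = u + ∫_u^v 1[t < min y] dt` and swapping the integrals, the inner integral becomes the
volume `(v - t)^m (v - u)^(n - 2 - m)` of the part of the box where those `m` coordinates exceed `t`.
-/

open MeasureTheory Set Function
open scoped Finset

/-- The discrete Choquet integral (Lovász extension) associated with a set function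
`a : 2^{[n]} → ℝ`: `C_a(x) = Σ_{S ⊆ [n]} a(S) min_{i ∈ S} x_i`, with the convention that
the term for `S = ∅` contributes `0`. -/
noncomputable def choquet {n : ℕ} (a : Finset (Fin n) → ℝ) (x : Fin n → ℝ) : ℝ :=
  ∑ S : Finset (Fin n), a S * (if h : S.Nonempty then S.inf' h x else 0)

theorem setIntegral_Ioo_indicator_Iio_one {u v m : ℝ} (hum : u ≤ m) (hmv : m ≤ v) :
    ∫ t in Ioo u v, (Iio m).indicator 1 t = m - u := by
  rw [integral_indicator_one measurableSet_Iio, measureReal_restrict_apply measurableSet_Iio,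
    inter_comm, Ioo_inter_Iio, min_eq_right hmv, Real.volume_real_Ioo_of_le hum]

theorem setIntegral_Ioo_sub_pow {u v : ℝ} (huv : u ≤ v) (m : ℕ) :
    ∫ t in Ioo u v, (v - t) ^ m = (v - u) ^ (m + 1) / (m + 1) := by
  rw [← integral_Ioc_eq_integral_Ioo, ← intervalIntegral.integral_of_le huv,
    intervalIntegral.integral_comp_sub_left (fun s => s ^ m) v, sub_self, integral_pow,
    zero_pow m.succ_ne_zero, sub_zero]

theorem volume_real_pi_Ioo {ι : Type*} [Fintype ι] {u v : ℝ} (huv : u ≤ v) :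
    volume.real (univ.pi fun _ : ι => Ioo u v) = (v - u) ^ Fintype.card ι := by
  rw [measureReal_def, Real.volume_pi_Ioo_toReal (fun _ => huv), Finset.prod_const,
    Finset.card_univ]

theorem pi_Ioo_inter_setOf_lt_inf' {ι : Type*} {u v t : ℝ} (hut : u ≤ t) (T : Finset ι)
    (hT : T.Nonempty) [DecidablePred (· ∈ T)] :
    {y : ι → ℝ | t < T.inf' hT y} ∩ univ.pi (fun _ => Ioo u v) =
      univ.pi fun i => Ioo (if i ∈ T then t else u) v := by
  ext y
  simp only [mem_inter_iff, mem_ofPred_eq, Finset.lt_inf'_iff, mem_univ_pi, mem_Ioo]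
  constructor
  · rintro ⟨hTy, hy⟩ i
    split_ifs with hi
    exacts [⟨hTy i hi, (hy i).2⟩, hy i]
  · intro hy
    refine ⟨fun i hi => by simpa [hi] using (hy i).1, fun i => ⟨?_, (hy i).2⟩⟩
    have hyi := (hy i).1
    split_ifs at hyi
    exacts [hut.trans_lt hyi, hyi]

theorem volume_real_setOf_lt_inf'_inter_pi_Ioo {ι : Type*} [Fintype ι] {u v t : ℝ} (hut : u ≤ t)
    (htv : t ≤ v) (T : Finset ι) (hT : T.Nonempty) :
    volume.real ({y : ι → ℝ | t < T.inf' hT y} ∩ univ.pi fun _ => Ioo u v) =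
      (v - t) ^ #T * (v - u) ^ (Fintype.card ι - #T) := by
  classical
  rw [pi_Ioo_inter_setOf_lt_inf' hut, measureReal_def,
    Real.volume_pi_Ioo_toReal fun i => by split_ifs <;> linarith]
  simp_rw [apply_ite (v - ·)]
  rw [Finset.prod_ite, Finset.prod_const, Finset.prod_const, Finset.filter_not,
    Finset.filter_mem_eq_of_subset T.subset_univ, Finset.card_univ_sdiff]

theorem setIntegral_pi_Ioo_inf' {ι : Type*} [Fintype ι] {u v : ℝ} (huv : u ≤ v) (T : Finset ι)
    (hT : T.Nonempty) :
    ∫ y in univ.pi (fun _ : ι => Ioo u v), T.inf' hT y =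
      (v - u) ^ Fintype.card ι * (u + (v - u) / (#T + 1)) := by
  set B := univ.pi fun _ : ι => Ioo u v
  have hB : MeasurableSet B := .univ_pi fun _ => measurableSet_Ioo
  have hinf : Measurable fun y : ι → ℝ => T.inf' hT y :=
    (Continuous.finset_inf'_apply hT fun i _ => continuous_apply i).measurable
  let F : (ι → ℝ) → ℝ → ℝ := fun y => (Iio (T.inf' hT y)).indicator 1
  have hlayer : ∀ y ∈ B, T.inf' hT y = u + ∫ t in Ioo u v, F y t := by
    intro y hy
    have hmem : ∀ i ∈ T, y i ∈ Ioo u v := fun i _ => hy i (mem_univ i)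
    obtain ⟨i, hi⟩ := hT
    rw [setIntegral_Ioo_indicator_Iio_one (Finset.le_inf' _ _ fun i hi => (hmem i hi).1.le)
      ((Finset.inf'_le _ hi).trans (hmem i hi).2.le), add_sub_cancel]
  have : IsFiniteMeasure (volume.restrict B) := by
    rw [isFiniteMeasure_restrict, Real.volume_pi_Ioo]
    exact ENNReal.prod_ne_top fun _ _ => ENNReal.ofReal_ne_top
  have hF : Integrable (uncurry F) ((volume.restrict B).prod (volume.restrict (Ioo u v))) := by
    have hset : MeasurableSet {p : (ι → ℝ) × ℝ | p.2 < T.inf' hT p.1} :=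
      measurableSet_lt measurable_snd (hinf.comp measurable_fst)
    refine (integrable_const (1 : ℝ)).mono' (measurable_const.indicator hset).aestronglyMeasurable
      (ae_of_all _ fun p => ?_)
    exact norm_indicator_le_norm_self _ _ |>.trans (by simp)
  have hinner : ∀ t ∈ Ioo u v, ∫ y in B, F y t =
      (v - t) ^ #T * (v - u) ^ (Fintype.card ι - #T) := fun t ht => by
    change ∫ y in B, {y | t < T.inf' hT y}.indicator 1 y = _
    rw [integral_indicator_one (measurableSet_lt measurable_const hinf),
      measureReal_restrict_apply (measurableSet_lt measurable_const hinf),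
      volume_real_setOf_lt_inf'_inter_pi_Ioo ht.1.le ht.2.le]
  obtain ⟨d, hd⟩ := Nat.exists_eq_add_of_le T.card_le_univ
  calc ∫ y in B, T.inf' hT y = ∫ y in B, (u + ∫ t in Ioo u v, F y t) :=
        setIntegral_congr_fun hB hlayer
    _ = (v - u) ^ Fintype.card ι * u + ∫ t in Ioo u v, ∫ y in B, F y t := by
      have hint : Integrable (fun y => ∫ t in Ioo u v, F y t) (volume.restrict B) :=
        hF.integral_prod_left
      rw [integral_add (integrable_const u) hint, integral_const,
        integral_integral_swap hF, measureReal_restrict_apply_univ, volume_real_pi_Ioo huv,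
        smul_eq_mul]
    _ = (v - u) ^ Fintype.card ι * u +
          ∫ t in Ioo u v, (v - t) ^ #T * (v - u) ^ (Fintype.card ι - #T) := by
      rw [setIntegral_congr_fun measurableSet_Ioo hinner]
    _ = _ := by
      rw [integral_mul_const, setIntegral_Ioo_sub_pow huv, hd, Nat.add_sub_cancel_left]
      field_simp
      ring

theorem integral_choquet {X : Type*} [MeasurableSpace X] {μ : Measure X} {n : ℕ}
    (a : Finset (Fin n) → ℝ) {f : X → Fin n → ℝ}
    (hf : ∀ (S : Finset (Fin n)) (hS : S.Nonempty), Integrable (fun y => S.inf' hS (f y)) μ) :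
    ∫ y, choquet a (f y) ∂μ =
      ∑ S, a S * ∫ y, (if hS : S.Nonempty then S.inf' hS (f y) else 0) ∂μ := by
  simp_rw [choquet, ← integral_const_mul]
  refine integral_finsetSum _ fun S _ => ?_
  by_cases hS : S.Nonempty
  · simpa only [dif_pos hS] using (hf S hS).const_mul (a S)
  · simp only [dif_neg hS, mul_zero]
    exact integrable_zero _ _ _

section ExtendPair

variable {α : Type*} [DecidableEq α] {j k : α} {u v : ℝ}

/-- The point `(y | x_j = u, x_k = v)` of the paper. -/
def extendPair (j k : α) (u v : ℝ) (y : {i // i ≠ j ∧ i ≠ k} → ℝ) (i : α) : ℝ :=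
  if h : i = j then u else if h' : i = k then v else y ⟨i, h, h'⟩

theorem continuous_extendPair : Continuous (extendPair j k u v) := by
  refine continuous_pi fun i => ?_
  unfold extendPair
  split_ifs
  exacts [continuous_const, continuous_const, continuous_apply _]

theorem extendPair_mem_Icc (huv : u ≤ v) {y : {i // i ≠ j ∧ i ≠ k} → ℝ}
    (hy : ∀ i, y i ∈ Icc u v) (i : α) : extendPair j k u v y i ∈ Icc u v := by
  unfold extendPair
  split_ifs
  exacts [⟨le_rfl, huv⟩, ⟨huv, le_rfl⟩, hy _]

theorem inf'_extendPair_of_mem (huv : u ≤ v) {y : {i // i ≠ j ∧ i ≠ k} → ℝ}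
    (hy : ∀ i, y i ∈ Icc u v) {S : Finset α} (hS : S.Nonempty) (hj : j ∈ S) :
    S.inf' hS (extendPair j k u v y) = u :=
  le_antisymm ((S.inf'_le _ hj).trans_eq (dif_pos rfl))
    (S.le_inf' hS _ fun i _ => (extendPair_mem_Icc huv hy i).1)

theorem inf'_extendPair_of_notMem {y : {i // i ≠ j ∧ i ≠ k} → ℝ} (hy : ∀ i, y i ≤ v)
    {S : Finset α} (hS : S.Nonempty) (hj : j ∉ S)
    (hT : (S.subtype (fun i => i ≠ j ∧ i ≠ k)).Nonempty) :
    S.inf' hS (extendPair j k u v y) = (S.subtype _).inf' hT y := by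
  refine le_antisymm (Finset.le_inf' _ _ fun ⟨i, hij, hik⟩ hi => ?_)
    (Finset.le_inf' _ _ fun i hi => ?_)
  · refine (S.inf'_le _ (Finset.mem_subtype.1 hi)).trans_eq ?_
    simp [extendPair, hij, hik]
  · have hij : i ≠ j := by rintro rfl; exact hj hi
    by_cases hik : i = k
    · obtain ⟨i₀, hi₀⟩ := hT
      subst hik
      simpa [extendPair, hij] using (Finset.inf'_le _ hi₀).trans (hy i₀)
    · have hiT : (⟨i, hij, hik⟩ : {i // i ≠ j ∧ i ≠ k}) ∈ S.subtype _ := Finset.mem_subtype.2 hi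
      exact (Finset.inf'_le y hiT).trans_eq (by simp [extendPair, hij, hik])

theorem inf'_extendPair_of_subtype_eq_empty {y : {i // i ≠ j ∧ i ≠ k} → ℝ}
    {S : Finset α} (hS : S.Nonempty) (hj : j ∉ S)
    (hT : S.subtype (fun i => i ≠ j ∧ i ≠ k) = ∅) :
    S.inf' hS (extendPair j k u v y) = v := by
  refine (Finset.inf'_congr hS rfl fun i hi => ?_).trans (S.inf'_const hS v)
  have hij : i ≠ j := by rintro rfl; exact hj hi
  have hik : i = k := by
    by_contra hik
    have hiT : (⟨i, hij, hik⟩ : {i // i ≠ j ∧ i ≠ k}) ∈ S.subtype _ := Finset.mem_subtype.2 hi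
    simp [hT] at hiT
  subst hik
  simp [extendPair, hij]

theorem card_subtype_ne_and_ne {S : Finset α} (hj : j ∉ S) :
    #(S.subtype (fun i => i ≠ j ∧ i ≠ k)) = #(S.erase k) := by
  rw [Finset.card_subtype, ← Finset.filter_ne',
    Finset.filter_congr fun i hi => and_iff_right (ne_of_mem_of_not_mem hi hj)]

variable [Fintype α]

theorem fintype_card_subtype_ne_and_ne (hjk : j ≠ k) :
    Fintype.card {i // i ≠ j ∧ i ≠ k} = Fintype.card α - 2 := by
  rw [Fintype.card_subtype, ← Finset.card_pair hjk, ← Finset.card_compl]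
  congr 1
  ext i
  simp

theorem integrableOn_pi_Ioo_inf'_extendPair {S : Finset α} (hS : S.Nonempty) :
    IntegrableOn (fun y => S.inf' hS (extendPair j k u v y)) (univ.pi fun _ => Ioo u v) :=
  (Continuous.finset_inf'_apply hS fun i _ => (continuous_apply i).comp continuous_extendPair)
    |>.continuousOn.integrableOn_compact (isCompact_univ_pi fun _ => isCompact_Icc)
    |>.mono_set (pi_mono fun _ _ => Ioo_subset_Icc_self)

theorem setIntegral_pi_Ioo_inf'_extendPair (huv : u ≤ v) {S : Finset α} (hS : S.Nonempty) :
    ∫ y in univ.pi (fun _ => Ioo u v), S.inf' hS (extendPair j k u v y) =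
      (v - u) ^ Fintype.card {i // i ≠ j ∧ i ≠ k} *
        if j ∈ S then u else u + (v - u) / (#(S.erase k) + 1) := by
  have hB : MeasurableSet (univ.pi fun _ : {i // i ≠ j ∧ i ≠ k} => Ioo u v) :=
    .univ_pi fun _ => measurableSet_Ioo
  have hIcc : ∀ y ∈ univ.pi (fun _ : {i // i ≠ j ∧ i ≠ k} => Ioo u v), ∀ i, y i ∈ Icc u v :=
    fun y hy i => Ioo_subset_Icc_self (hy i (mem_univ i))
  split_ifs with hj
  · rw [setIntegral_congr_fun hB fun y hy => inf'_extendPair_of_mem huv (hIcc y hy) hS hj,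
      setIntegral_const, volume_real_pi_Ioo huv, smul_eq_mul]
  rw [← card_subtype_ne_and_ne hj]
  rcases (S.subtype fun i => i ≠ j ∧ i ≠ k).eq_empty_or_nonempty with hT | hT
  · rw [setIntegral_congr_fun hB fun y hy => inf'_extendPair_of_subtype_eq_empty hS hj hT,
      setIntegral_const, volume_real_pi_Ioo huv, smul_eq_mul, hT]
    simp
  · rw [setIntegral_congr_fun hB fun y hy =>
      inf'_extendPair_of_notMem (fun i => (hIcc y hy i).2) hS hj hT, setIntegral_pi_Ioo_inf' huv]

end ExtendPair

theorem integral_choquet_box_general (n : ℕ) (u v : ℝ) (huv : u < v)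
    (a : Finset (Fin n) → ℝ) (j k : Fin n) (hjk : j ≠ k) :
    (∫ y in Set.univ.pi fun _ : {i : Fin n // i ≠ j ∧ i ≠ k} => Set.Ioo u v,
        choquet a fun i => if h : i = j then u else if h' : i = k then v else y ⟨i, h, h'⟩)
      = (v - u) ^ (n - 2) *
          ((∑ S ∈ Finset.univ.filter fun S : Finset (Fin n) => j ∈ S, a S * u) +
            (∑ S ∈ Finset.univ.filter fun S : Finset (Fin n) => j ∉ S ∧ k ∈ S,
              a S * ((u * ((S.card : ℝ) - 1) + v) / (S.card : ℝ))) +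
            ∑ S ∈ Finset.univ.filter fun S : Finset (Fin n) => j ∉ S ∧ k ∉ S ∧ S.Nonempty,
              a S * ((u * (S.card : ℝ) + v) / ((S.card : ℝ) + 1))) := by
  change ∫ y in _, choquet a (extendPair j k u v y) = _
  rw [integral_choquet a fun S hS => integrableOn_pi_Ioo_inf'_extendPair hS,
    Finset.sum_filter, Finset.sum_filter, Finset.sum_filter, ← Finset.sum_add_distrib,
    ← Finset.sum_add_distrib, Finset.mul_sum]
  refine Finset.sum_congr rfl fun S _ => ?_
  rcases S.eq_empty_or_nonempty with rfl | hS
  · simp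
  simp only [dif_pos hS, setIntegral_pi_Ioo_inf'_extendPair huv.le hS,
    fintype_card_subtype_ne_and_ne hjk, Fintype.card_fin]
  by_cases hj : j ∈ S
  · simp only [hj, ↓reduceIte, not_true_eq_false, false_and, add_zero]
    ring
  by_cases hk : k ∈ S
  · have hcard : (#(S.erase k) : ℝ) + 1 = #S := by exact_mod_cast Finset.card_erase_add_one hk
    have : (#S : ℝ) ≠ 0 := by positivity
    rw [hcard]
    simp only [hj, hk, ↓reduceIte, not_false_eq_true, not_true_eq_false, and_self, and_false,
      false_and, zero_add, add_zero]
    field_simp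
    ring
  · simp only [hj, hk, hS, ↓reduceIte, not_false_eq_true, Finset.erase_eq_of_notMem, and_self,
      and_false, zero_add, add_zero]
    field_simp
    ring

/-- For `n ≥ 2`, `0 ≤ u < v ≤ 1`, a set function `a` with `a(∅) = 0`, and `j ≠ k`,
`∫_{]u,v[^{n−2}} C_a(x | x_j = u, x_k = v) ∏_{i ∉ {j,k}} dx_i
  = (v−u)^{n−2} ( Σ_{S ∋ j} a(S) u + Σ_{S ∌ j, S ∋ k} a(S)(u(|S|−1)+v)/|S|
      + Σ_{S ∌ j, S ∌ k, S ≠ ∅} a(S)(u|S|+v)/(|S|+1) )`. -/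
theorem integral_choquet_box (n : ℕ) (hn : 2 ≤ n) (u v : ℝ)
    (hu : 0 ≤ u) (huv : u < v) (hv : v ≤ 1)
    (a : Finset (Fin n) → ℝ) (ha0 : a ∅ = 0) (j k : Fin n) (hjk : j ≠ k) :
    (∫ y in Set.univ.pi fun _ : {i : Fin n // i ≠ j ∧ i ≠ k} => Set.Ioo u v,
        choquet a fun i => if h : i = j then u else if h' : i = k then v else y ⟨i, h, h'⟩)
      = (v - u) ^ (n - 2) *
          ((∑ S ∈ Finset.univ.filter fun S : Finset (Fin n) => j ∈ S, a S * u) +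
            (∑ S ∈ Finset.univ.filter fun S : Finset (Fin n) => j ∉ S ∧ k ∈ S,
              a S * ((u * ((S.card : ℝ) - 1) + v) / (S.card : ℝ))) +
            ∑ S ∈ Finset.univ.filter fun S : Finset (Fin n) => j ∉ S ∧ k ∉ S ∧ S.Nonempty,
              a S * ((u * (S.card : ℝ) + v) / ((S.card : ℝ) + 1))) :=
  integral_choquet_box_general n u v huv a j k hjk
end
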